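/- arXiv:0904.1366 — 11 statements merged into one kernel-verified Lean document; each statement's English description precedes it below -/
import Mathlib

section
/- In a tuple-independent probabilistic database, for every tuple t_i and every position j with 1 ≤ j ≤ n, the positional probability Pr(r(t_i)=j) equals the coefficient of x^j in the generating polynomial F^i(x) = (∏_{l=1}^{i−1} ((1−p_l) + p_l·x)) · (p_i·x). -/
/-- The probability of the possible world `W` in a tuple-independent probabilistic
database whose tuple `t_l` exists independently with probability `p l`. -/
noncomputable def worldProb (n : ℕ) (p : Fin n → ℝ) (W : Finset (Fin n)) : ℝ :=
  (∏ l ∈ W, p l) * ∏ l ∈ Wᶜ, (1 - p l)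

/-- The positional probability `Pr(r(t_i) = j)`: the total probability of possible worlds `W`
with `i ∈ W` in which exactly `j - 1` tuples with higher score (i.e. smaller index) than `t_i`
are present, where the tuples `t_1, …, t_n` are listed in strictly decreasing score order. -/
noncomputable def posProb (n : ℕ) (p : Fin n → ℝ) (i : Fin n) (j : ℕ) : ℝ :=
  ∑ W ∈ Finset.univ.filter (fun W : Finset (Fin n) =>
      i ∈ W ∧ (W.filter (fun l => l < i)).card + 1 = j), worldProb n p W

/-- In a tuple-independent probabilistic database, for every tuple `t_i`
and every position `j` with `1 ≤ j ≤ n`, the positional probability `Pr(r(t_i) = j)` equals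
the coefficient of `x^j` in the generating polynomial
`F^i(x) = (∏_{l < i} ((1 - p l) + p l • x)) * (p i • x)`. -/
theorem posProb_eq_coeff_generating_polynomial
    (n : ℕ) (p : Fin n → ℝ) (hp : ∀ l, 0 ≤ p l ∧ p l ≤ 1)
    (i : Fin n) (j : ℕ) (hj1 : 1 ≤ j) (hjn : j ≤ n) :
    ((∏ l ∈ Finset.univ.filter (fun l => l < i),
        (Polynomial.C (1 - p l) + Polynomial.C (p l) * Polynomial.X)) *
      (Polynomial.C (p i) * Polynomial.X)).coeff j = posProb n p i j := by
  classical
  set L : Finset (Fin n) := Finset.univ.filter (fun l => l < i) with hLdef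
  set R : Finset (Fin n) := Finset.univ.filter (fun l => i < l) with hRdef
  have hmemL : ∀ l : Fin n, l ∈ L ↔ l < i := by intro l; simp [hLdef]
  have hmemR : ∀ l : Fin n, l ∈ R ↔ i < l := by intro l; simp [hRdef]
  -- LHS computation
  have hprod : ∏ l ∈ L, (Polynomial.C (1 - p l) + Polynomial.C (p l) * Polynomial.X)
      = ∑ S ∈ L.powerset,
          Polynomial.C ((∏ l ∈ S, p l) * ∏ l ∈ L \ S, (1 - p l)) * Polynomial.X ^ S.card := by
    rw [show (∏ l ∈ L, (Polynomial.C (1 - p l) + Polynomial.C (p l) * Polynomial.X))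
        = ∏ l ∈ L, (Polynomial.C (p l) * Polynomial.X + Polynomial.C (1 - p l)) from
      Finset.prod_congr rfl (fun l _ => add_comm _ _)]
    rw [Finset.prod_add]
    refine Finset.sum_congr rfl (fun S _ => ?_)
    rw [Finset.prod_mul_distrib, Finset.prod_const, map_mul, map_prod, map_prod]
    ring
  have hLHS : ((∏ l ∈ L, (Polynomial.C (1 - p l) + Polynomial.C (p l) * Polynomial.X)) *
      (Polynomial.C (p i) * Polynomial.X)).coeff j
      = ∑ S ∈ L.powerset.filter (fun S => S.card + 1 = j),
          ((∏ l ∈ S, p l) * ∏ l ∈ L \ S, (1 - p l)) * p i := by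
    rw [hprod, Finset.sum_mul, Polynomial.finset_sum_coeff, Finset.sum_filter]
    refine Finset.sum_congr rfl (fun S _ => ?_)
    have h1 : Polynomial.C ((∏ l ∈ S, p l) * ∏ l ∈ L \ S, (1 - p l)) * Polynomial.X ^ S.card *
        (Polynomial.C (p i) * Polynomial.X)
        = Polynomial.C (((∏ l ∈ S, p l) * ∏ l ∈ L \ S, (1 - p l)) * p i) *
          Polynomial.X ^ (S.card + 1) := by
      simp only [map_mul]; ring
    rw [h1, Polynomial.coeff_C_mul, Polynomial.coeff_X_pow]
    rcases eq_or_ne (S.card + 1) j with h | h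
    · simp [h]
    · rw [if_neg (fun hh => h hh.symm), if_neg h, mul_zero]
  -- RHS computation
  have hRHS : posProb n p i j
      = ∑ x ∈ (L.powerset.filter (fun S => S.card + 1 = j)) ×ˢ R.powerset,
          (((∏ l ∈ x.1, p l) * ∏ l ∈ L \ x.1, (1 - p l)) * p i) *
            ((∏ l ∈ x.2, p l) * ∏ l ∈ R \ x.2, (1 - p l)) := by
    unfold posProb worldProb
    refine Finset.sum_nbij' (i := fun W => (W ∩ L, W ∩ R))
      (j := fun x => insert i (x.1 ∪ x.2)) ?_ ?_ ?_ ?_ ?_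
    · intro W hW
      simp only [Finset.mem_filter, Finset.mem_univ, true_and] at hW
      simp only [Finset.mem_product, Finset.mem_filter, Finset.mem_powerset]
      refine ⟨⟨Finset.inter_subset_right, ?_⟩, Finset.inter_subset_right⟩
      have h2 : W ∩ L = W.filter (fun l => l < i) := by
        ext l; simp [hmemL, Finset.mem_filter]
      rw [h2]; exact hW.2
    · intro x hx
      simp only [Finset.mem_product, Finset.mem_filter, Finset.mem_powerset] at hx
      obtain ⟨⟨hS, hcard⟩, hT⟩ := hx
      simp only [Finset.mem_filter, Finset.mem_univ, true_and]
      refine ⟨Finset.mem_insert_self _ _, ?_⟩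
      have h3 : (insert i (x.1 ∪ x.2)).filter (fun l => l < i) = x.1 := by
        ext l
        simp only [Finset.mem_filter, Finset.mem_insert, Finset.mem_union]
        constructor
        · rintro ⟨h1 | h1 | h1, h2⟩
          · exact absurd h2 (by simp [h1])
          · exact h1
          · exact absurd h2 (not_lt.2 ((hmemR l).1 (hT h1)).le)
        · intro h; exact ⟨Or.inr (Or.inl h), (hmemL l).1 (hS h)⟩
      rw [h3]; exact hcard
    · intro W hW
      simp only [Finset.mem_filter, Finset.mem_univ, true_and] at hW
      ext l
      simp only [Finset.mem_insert, Finset.mem_union, Finset.mem_inter]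
      constructor
      · rintro (h | ⟨h, _⟩ | ⟨h, _⟩)
        · exact h ▸ hW.1
        · exact h
        · exact h
      · intro h
        rcases lt_trichotomy l i with h'|h'|h'
        · exact Or.inr (Or.inl ⟨h, (hmemL l).2 h'⟩)
        · exact Or.inl h'
        · exact Or.inr (Or.inr ⟨h, (hmemR l).2 h'⟩)
    · intro x hx
      simp only [Finset.mem_product, Finset.mem_filter, Finset.mem_powerset] at hx
      obtain ⟨⟨hS, _⟩, hT⟩ := hx
      have e1 : insert i (x.1 ∪ x.2) ∩ L = x.1 := by
        ext l
        simp only [Finset.mem_inter, Finset.mem_insert, Finset.mem_union, hmemL]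
        constructor
        · rintro ⟨h1 | h1 | h1, h2⟩
          · exact absurd h2 (by simp [h1])
          · exact h1
          · exact absurd h2 (not_lt.2 ((hmemR l).1 (hT h1)).le)
        · intro h; exact ⟨Or.inr (Or.inl h), (hmemL l).1 (hS h)⟩
      have e2 : insert i (x.1 ∪ x.2) ∩ R = x.2 := by
        ext l
        simp only [Finset.mem_inter, Finset.mem_insert, Finset.mem_union, hmemR]
        constructor
        · rintro ⟨h1 | h1 | h1, h2⟩
          · exact absurd h2 (by simp [h1])
          · exact absurd h2 (not_lt.2 ((hmemL l).1 (hS h1)).le)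
          · exact h1
        · intro h; exact ⟨Or.inr (Or.inr h), (hmemR l).1 (hT h)⟩
      exact Prod.ext e1 e2
    · intro W hW
      simp only [Finset.mem_filter, Finset.mem_univ, true_and] at hW
      obtain ⟨hiW, _⟩ := hW
      have hWeq : W = (W ∩ L) ∪ insert i (W ∩ R) := by
        ext l
        simp only [Finset.mem_union, Finset.mem_insert, Finset.mem_inter, hmemL, hmemR]
        constructor
        · intro h
          rcases lt_trichotomy l i with h'|h'|h'
          · exact Or.inl ⟨h, h'⟩
          · exact Or.inr (Or.inl h')
          · exact Or.inr (Or.inr ⟨h, h'⟩)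
        · rintro (⟨h, _⟩ | h | ⟨h, _⟩)
          · exact h
          · exact h ▸ hiW
          · exact h
      have hWceq : Wᶜ = (L \ (W ∩ L)) ∪ (R \ (W ∩ R)) := by
        ext l
        simp only [Finset.mem_compl, Finset.mem_union, Finset.mem_sdiff, Finset.mem_inter,
          hmemL, hmemR]
        constructor
        · intro h
          rcases lt_trichotomy l i with h'|h'|h'
          · exact Or.inl ⟨h', fun h'' => h h''.1⟩
          · exact absurd (h' ▸ hiW) h
          · exact Or.inr ⟨h', fun h'' => h h''.1⟩
        · rintro (⟨_, h⟩ | ⟨h', h⟩) <;> intro hw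
          · exact h ⟨hw, by assumption⟩
          · exact h ⟨hw, h'⟩
      have hd1 : Disjoint (W ∩ L) (insert i (W ∩ R)) := by
        rw [Finset.disjoint_left]
        intro l hl hl'
        have hli : l < i := (hmemL l).1 (Finset.mem_of_mem_inter_right hl)
        rcases Finset.mem_insert.1 hl' with h | h
        · exact absurd hli (by simp [h])
        · exact absurd hli (not_lt.2 ((hmemR l).1 (Finset.mem_of_mem_inter_right h)).le)
      have hd2 : Disjoint (L \ (W ∩ L)) (R \ (W ∩ R)) := by
        rw [Finset.disjoint_left]
        intro l hl hl'
        exact absurd ((hmemL l).1 (Finset.mem_sdiff.1 hl).1)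
          (not_lt.2 ((hmemR l).1 (Finset.mem_sdiff.1 hl').1).le)
      have hiWR : i ∉ W ∩ R := fun h =>
        lt_irrefl i ((hmemR i).1 (Finset.mem_of_mem_inter_right h))
      have hpW : ∏ l ∈ W, p l = (∏ l ∈ W ∩ L, p l) * (p i * ∏ l ∈ W ∩ R, p l) := by
        conv_lhs => rw [hWeq]
        rw [Finset.prod_union hd1, Finset.prod_insert hiWR]
      have hpWc : ∏ l ∈ Wᶜ, (1 - p l)
          = (∏ l ∈ L \ (W ∩ L), (1 - p l)) * ∏ l ∈ R \ (W ∩ R), (1 - p l) := by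
        rw [hWceq, Finset.prod_union hd2]
      dsimp only
      rw [hpW, hpWc]
      ring
  rw [hLHS, hRHS, Finset.sum_product]
  have hone : ∑ T ∈ R.powerset, (∏ l ∈ T, p l) * ∏ l ∈ R \ T, (1 - p l) = 1 := by
    rw [← Finset.prod_add]
    simp
  refine Finset.sum_congr rfl (fun S _ => ?_)
  dsimp only
  rw [← Finset.mul_sum, hone, mul_one]
end

section
/- In a tuple-independent probabilistic database, for every tuple t_i and every α ∈ ℂ, the PRF^e value satisfies Υ_α(t_i) = Σ_{j=1}^n Pr(r(t_i)=j)·α^j = p_i·α·∏_{l=1}^{i−1} (1 − p_l + p_l·α). -/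
/-- In a tuple-independent probabilistic database, for every tuple `t_i` and
every `α ∈ ℂ`, the `PRF^e` value satisfies
`Υ_α(t_i) = Σ_{j=1}^n Pr(r(t_i)=j)·α^j = p_i·α·∏_{l<i} (1 − p_l + p_l·α)`. -/
theorem prfe_eq_product (n : ℕ) (p : Fin n → ℝ) (hp : ∀ l, 0 ≤ p l ∧ p l ≤ 1)
    (i : Fin n) (α : ℂ) :
    ∑ j ∈ Finset.Icc 1 n, (posProb n p i j : ℂ) * α ^ j
      = (p i : ℂ) * α *
        ∏ l ∈ Finset.univ.filter (fun l => l < i), (1 - (p l : ℂ) + (p l : ℂ) * α) := by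
  classical
  set q : Fin n → ℂ := fun l => (p l : ℂ) * (if l < i then α else 1) with hq
  set r : Fin n → ℂ := fun l => if l = i then 0 else 1 - (p l : ℂ) with hr
  have hkey : ∀ W : Finset (Fin n), i ∈ W →
      (worldProb n p W : ℂ) * α ^ ((W.filter (fun l => l < i)).card + 1)
        = α * ((∏ l ∈ W, q l) * ∏ l ∈ Wᶜ, r l) := by
    intro W hiW
    have h1 : (∏ l ∈ W, q l)
        = (∏ l ∈ W, (p l : ℂ)) * α ^ ((W.filter (fun l => l < i)).card) := by
      rw [hq, Finset.prod_mul_distrib, Finset.prod_ite, Finset.prod_const, Finset.prod_const,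
        one_pow, mul_one]
    have h2 : (∏ l ∈ Wᶜ, r l) = ∏ l ∈ Wᶜ, (1 - (p l : ℂ)) := by
      apply Finset.prod_congr rfl
      intro l hl
      have hne : l ≠ i := by
        intro h; subst h; exact (Finset.mem_compl.mp hl) hiW
      simp [hr, hne]
    rw [h1, h2, worldProb]
    push_cast
    ring
  have hA : ∑ j ∈ Finset.Icc 1 n, (posProb n p i j : ℂ) * α ^ j
      = ∑ W ∈ Finset.univ.filter (fun W : Finset (Fin n) => i ∈ W),
          (worldProb n p W : ℂ) * α ^ ((W.filter (fun l => l < i)).card + 1) := by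
    rw [← Finset.sum_fiberwise_of_maps_to
      (g := fun W : Finset (Fin n) => (W.filter (fun l => l < i)).card + 1)
      (t := Finset.Icc 1 n) ?_
      (fun W => (worldProb n p W : ℂ) * α ^ ((W.filter (fun l => l < i)).card + 1))]
    · apply Finset.sum_congr rfl
      intro j hj
      simp only [posProb]
      push_cast
      rw [Finset.sum_mul, ← Finset.filter_filter]
      apply Finset.sum_congr rfl
      intro W hW
      have hgW := (Finset.mem_filter.mp hW).2
      rw [hgW]
    · intro W hW
      have hsub : W.filter (fun l => l < i) ⊆ Finset.univ.erase i := by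
        intro l hl
        exact Finset.mem_erase.mpr ⟨ne_of_lt (Finset.mem_filter.mp hl).2, Finset.mem_univ l⟩
      have hcard := Finset.card_le_card hsub
      rw [Finset.card_erase_of_mem (Finset.mem_univ i), Finset.card_univ, Fintype.card_fin]
        at hcard
      have hn : 0 < n := i.pos
      rw [Finset.mem_Icc]
      beta_reduce
      omega
  rw [hA]
  have hB : ∑ W ∈ Finset.univ.filter (fun W : Finset (Fin n) => i ∈ W),
      (worldProb n p W : ℂ) * α ^ ((W.filter (fun l => l < i)).card + 1)
      = α * ∏ l, (q l + r l) := by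
    rw [Finset.sum_congr rfl (fun W hW => hkey W (Finset.mem_filter.mp hW).2), ← Finset.mul_sum]
    congr 1
    have hext : ∑ W ∈ Finset.univ.filter (fun W : Finset (Fin n) => i ∈ W),
        (∏ l ∈ W, q l) * ∏ l ∈ Wᶜ, r l
        = ∑ W : Finset (Fin n), (∏ l ∈ W, q l) * ∏ l ∈ Wᶜ, r l := by
      apply Finset.sum_subset (Finset.filter_subset _ _) (fun W _ => ?_)
      intro hW
      have hiW : i ∉ W := by simpa using hW
      have hri : r i = 0 := by simp [hr]
      rw [Finset.prod_eq_zero (Finset.mem_compl.mpr hiW) hri, mul_zero]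
    rw [hext, Finset.prod_add, ← Finset.powerset_univ]
    apply Finset.sum_congr rfl
    intro W hW
    rw [Finset.compl_eq_univ_sdiff]
  rw [hB]
  have hC : ∏ l, (q l + r l)
      = (p i : ℂ) * ∏ l ∈ Finset.univ.filter (fun l => l < i),
          (1 - (p l : ℂ) + (p l : ℂ) * α) := by
    rw [← Finset.prod_filter_mul_prod_filter_not Finset.univ (fun l => l < i)]
    have h1 : ∏ l ∈ Finset.univ.filter (fun l => l < i), (q l + r l)
        = ∏ l ∈ Finset.univ.filter (fun l => l < i), (1 - (p l : ℂ) + (p l : ℂ) * α) := by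
      apply Finset.prod_congr rfl
      intro l hl
      have hli : l < i := (Finset.mem_filter.mp hl).2
      have hne : l ≠ i := ne_of_lt hli
      simp only [hq, hr, if_pos hli, if_neg hne]
      ring
    have h2 : ∏ l ∈ Finset.univ.filter (fun l => ¬ l < i), (q l + r l) = (p i : ℂ) := by
      rw [Finset.prod_eq_single_of_mem i (by simp)]
      · simp [hq, hr]
      · intro l hl hne
        have hnl : ¬ l < i := (Finset.mem_filter.mp hl).2
        simp only [hq, hr, if_neg hnl, if_neg hne]
        ring
    rw [h1, h2]
    ring
  rw [hC]
  ring
end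

section
/- In a probabilistic database with possible-worlds distribution Pr, for every subset τ ⊆ T with |τ| = k, the expected symmetric difference between τ and the top-k answer of a random world satisfies E[|τ Δ τ_pw|] = Σ_{t∈T∖τ} Pr(r(t) ≤ k) + Σ_{t∈τ} Pr(r(t) > k) = k + Σ_{t∈T} Pr(r(t) ≤ k) − 2·Σ_{t∈τ} Pr(r(t) ≤ k), where τ_pw is regarded as the set of its tuples. -/
open Finset

/-- The rank of a tuple `t` in the possible world `pw`: one plus the number of tuples of `pw`
with strictly higher score (intended for `t ∈ pw`). -/
noncomputable def rankIn {T : Type} [DecidableEq T] (score : T → ℝ) (pw : Finset T) (t : T) : ℕ :=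
  (pw.filter (fun t' => score t < score t')).card + 1

/-- The top-`k` answer of a possible world `pw` (as a set of tuples): the `min(k, |pw|)`
highest-scoring tuples of `pw`, i.e. the tuples of `pw` of rank at most `k`. -/
noncomputable def topk {T : Type} [DecidableEq T] (score : T → ℝ) (k : ℕ) (pw : Finset T) :
    Finset T :=
  pw.filter (fun t => rankIn score pw t ≤ k)

/-- `Pr(r(t) = i)`: the total probability of the possible worlds `pw` with `t ∈ pw` in which
`t` has rank exactly `i`. -/
noncomputable def prRankEq {T : Type} [Fintype T] [DecidableEq T]
    (score : T → ℝ) (P : Finset T → ℝ) (t : T) (i : ℕ) : ℝ :=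
  ∑ pw ∈ Finset.univ.filter (fun pw : Finset T => t ∈ pw ∧ rankIn score pw t = i), P pw

/-- `Pr(r(t) ≤ k)`: the total probability of the possible worlds `pw` with `t ∈ pw` in which
`t` has rank at most `k`. -/
noncomputable def prRankLe {T : Type} [Fintype T] [DecidableEq T]
    (score : T → ℝ) (P : Finset T → ℝ) (t : T) (k : ℕ) : ℝ :=
  ∑ pw ∈ Finset.univ.filter (fun pw : Finset T => t ∈ pw ∧ rankIn score pw t ≤ k), P pw

/-- In a probabilistic database with possible-worlds distribution `P`, for
every subset `τ ⊆ T` with `|τ| = k`, the expected symmetric difference between `τ` and the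
top-`k` answer of a random world satisfies
`E[|τ Δ τ_pw|] = Σ_{t∈T∖τ} Pr(r(t) ≤ k) + Σ_{t∈τ} Pr(r(t) > k)
              = k + Σ_{t∈T} Pr(r(t) ≤ k) − 2·Σ_{t∈τ} Pr(r(t) ≤ k)`,
where `Pr(r(t) > k) = 1 − Pr(r(t) ≤ k)` and `τ_pw` is regarded as the set of its tuples. -/
theorem expected_symmDiff_topk {T : Type} [Fintype T] [DecidableEq T]
    (score : T → ℝ) (hscore : Function.Injective score)
    (P : Finset T → ℝ) (hP0 : ∀ pw, 0 ≤ P pw) (hP1 : ∑ pw : Finset T, P pw = 1)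
    (k : ℕ) (τ : Finset T) (hτ : τ.card = k) :
    (∑ pw : Finset T, P pw * ((symmDiff τ (topk score k pw)).card : ℝ)) =
        (∑ t ∈ τᶜ, prRankLe score P t k) + ∑ t ∈ τ, (1 - prRankLe score P t k)
    ∧ (∑ pw : Finset T, P pw * ((symmDiff τ (topk score k pw)).card : ℝ)) =
        (k : ℝ) + (∑ t : T, prRankLe score P t k) - 2 * ∑ t ∈ τ, prRankLe score P t k := by

  classical
  have hmem : ∀ (t : T) (pw : Finset T),
      t ∈ topk score k pw ↔ (t ∈ pw ∧ rankIn score pw t ≤ k) := by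
    intro t pw; simp [topk]
  have hpr : ∀ t, prRankLe score P t k
      = ∑ pw : Finset T, P pw * (if t ∈ topk score k pw then (1:ℝ) else 0) := by
    intro t
    rw [prRankLe, Finset.sum_filter]
    refine Finset.sum_congr rfl fun pw _ => ?_
    by_cases h : t ∈ pw ∧ rankIn score pw t ≤ k <;> simp [h, hmem]
  have hcard : ∀ pw : Finset T,
      ((symmDiff τ (topk score k pw)).card : ℝ)
        = (∑ t ∈ τᶜ, (if t ∈ topk score k pw then (1:ℝ) else 0))
          + ∑ t ∈ τ, (1 - if t ∈ topk score k pw then (1:ℝ) else 0) := by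
    intro pw
    have hdisj : Disjoint (τ \ topk score k pw) (topk score k pw \ τ) :=
      disjoint_sdiff_sdiff
    have hsd : symmDiff τ (topk score k pw)
        = (τ \ topk score k pw) ∪ (topk score k pw \ τ) := rfl
    have h1 : (topk score k pw \ τ) = τᶜ.filter (fun t => t ∈ topk score k pw) := by
      ext t; simp [Finset.mem_sdiff, Finset.mem_filter, and_comm]
    have h2 : (τ \ topk score k pw) = τ.filter (fun t => t ∉ topk score k pw) := by
      ext t; simp [Finset.mem_sdiff]
    have e1 : ((topk score k pw \ τ).card : ℝ)
        = ∑ t ∈ τᶜ, (if t ∈ topk score k pw then (1:ℝ) else 0) := by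
      rw [h1, Finset.sum_boole]
    have hle : (τ.filter (fun t => t ∈ topk score k pw)).card ≤ τ.card :=
      Finset.card_filter_le _ _
    have e2 : ((τ \ topk score k pw).card : ℝ)
        = (k : ℝ) - ∑ t ∈ τ, (if t ∈ topk score k pw then (1:ℝ) else 0) := by
      have hn : (τ \ topk score k pw).card
          = τ.card - (τ.filter (fun t => t ∈ topk score k pw)).card := by
        rw [h2, Finset.filter_not, Finset.card_sdiff_of_subset (Finset.filter_subset _ _)]
      rw [hn, Nat.cast_sub hle, hτ, Finset.sum_boole]
    have e3 : (∑ t ∈ τ, (1 - if t ∈ topk score k pw then (1:ℝ) else 0))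
        = (k : ℝ) - ∑ t ∈ τ, (if t ∈ topk score k pw then (1:ℝ) else 0) := by
      rw [Finset.sum_sub_distrib, Finset.sum_const, hτ, nsmul_eq_mul, mul_one]
    rw [hsd, Finset.card_union_of_disjoint hdisj, Nat.cast_add, e1, e2, e3]
    ring
  have key : (∑ pw : Finset T, P pw * ((symmDiff τ (topk score k pw)).card : ℝ)) =
      (∑ t ∈ τᶜ, prRankLe score P t k) + ∑ t ∈ τ, (1 - prRankLe score P t k) := by
    calc ∑ pw : Finset T, P pw * ((symmDiff τ (topk score k pw)).card : ℝ)
        = ∑ pw : Finset T,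
            ((∑ t ∈ τᶜ, P pw * (if t ∈ topk score k pw then (1:ℝ) else 0))
              + ∑ t ∈ τ, P pw * (1 - if t ∈ topk score k pw then (1:ℝ) else 0)) := by
          refine Finset.sum_congr rfl fun pw _ => ?_
          rw [hcard pw, mul_add, Finset.mul_sum, Finset.mul_sum]
      _ = (∑ t ∈ τᶜ, ∑ pw : Finset T, P pw * (if t ∈ topk score k pw then (1:ℝ) else 0))
            + ∑ t ∈ τ, ∑ pw : Finset T, P pw * (1 - if t ∈ topk score k pw then (1:ℝ) else 0) := by
          rw [Finset.sum_add_distrib, Finset.sum_comm, Finset.sum_comm (s := Finset.univ)]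
      _ = (∑ t ∈ τᶜ, prRankLe score P t k) + ∑ t ∈ τ, (1 - prRankLe score P t k) := by
          refine congrArg₂ (· + ·) ?_ ?_
          · exact Finset.sum_congr rfl fun t _ => (hpr t).symm
          · refine Finset.sum_congr rfl fun t _ => ?_
            simp only [mul_sub, mul_one, Finset.sum_sub_distrib, hP1, hpr t]
  refine ⟨key, ?_⟩
  rw [key]
  have hsplit : (∑ t : T, prRankLe score P t k)
      = (∑ t ∈ τᶜ, prRankLe score P t k) + ∑ t ∈ τ, prRankLe score P t k := by
    rw [add_comm, Finset.sum_add_sum_compl]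
  have h3 : (∑ t ∈ τ, (1 - prRankLe score P t k))
      = (k : ℝ) - ∑ t ∈ τ, prRankLe score P t k := by
    rw [Finset.sum_sub_distrib, Finset.sum_const, hτ, nsmul_eq_mul, mul_one]
  rw [h3, hsplit]
  ring
end

section
/- In a probabilistic database with possible-worlds distribution Pr, if τ = {τ(1),…,τ(k)} is a set of k tuples having the k largest values of Pr(r(t) ≤ k) among all tuples of T, then τ minimizes the expected symmetric difference E[|τ' Δ τ_pw|] over all subsets τ' ⊆ T with |τ'| = k; i.e., τ is the consensus top-k answer under the symmetric difference metric. -/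
open Finset

private lemma card_symmDiff_aux {T : Type} [DecidableEq T] (s u : Finset T) :
    (symmDiff s u).card + 2 * (s ∩ u).card = s.card + u.card := by
  have hd : Disjoint (s \ u) (u \ s) := disjoint_sdiff_sdiff
  rw [symmDiff_def, sup_eq_union, Finset.card_union_of_disjoint hd]
  have h1 := Finset.card_sdiff_add_card_inter s u
  have h2 := Finset.card_sdiff_add_card_inter u s
  rw [Finset.inter_comm] at h2
  omega

private lemma sum_inter_topk {T : Type} [Fintype T] [DecidableEq T]
    (score : T → ℝ) (P : Finset T → ℝ) (k : ℕ) (s : Finset T) :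
    ∑ pw : Finset T, P pw * ((s ∩ topk score k pw).card : ℝ)
      = ∑ t ∈ s, prRankLe score P t k := by
  have hcard : ∀ pw : Finset T, ((s ∩ topk score k pw).card : ℝ)
      = ∑ t ∈ s, (if t ∈ pw ∧ rankIn score pw t ≤ k then (1:ℝ) else 0) := by
    intro pw
    rw [← Finset.filter_mem_eq_inter, Finset.card_filter]
    push_cast
    refine Finset.sum_congr rfl fun t _ => ?_
    congr 1
    simp [topk, Finset.mem_filter]
  simp_rw [hcard, Finset.mul_sum]
  rw [Finset.sum_comm]
  refine Finset.sum_congr rfl fun t _ => ?_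
  rw [prRankLe, Finset.sum_filter]
  refine Finset.sum_congr rfl fun pw _ => ?_
  by_cases h : t ∈ pw ∧ rankIn score pw t ≤ k <;> simp [h]


/-- In a probabilistic database with possible-worlds distribution `P`, if
`τ` is a set of `k` tuples having the `k` largest values of `Pr(r(t) ≤ k)` among all tuples
of `T`, then `τ` minimizes the expected symmetric difference `E[|τ' Δ τ_pw|]` over all subsets
`τ' ⊆ T` with `|τ'| = k`; i.e. `τ` is the consensus top-`k` answer under the symmetric
difference metric. -/
theorem topk_prRankLe_minimizes_expected_symmDiff {T : Type} [Fintype T] [DecidableEq T]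
    (score : T → ℝ) (hscore : Function.Injective score)
    (P : Finset T → ℝ) (hP0 : ∀ pw, 0 ≤ P pw) (hP1 : ∑ pw : Finset T, P pw = 1)
    (k : ℕ) (τ : Finset T) (hτ : τ.card = k)
    (hlargest : ∀ t ∈ τ, ∀ t' ∉ τ, prRankLe score P t' k ≤ prRankLe score P t k) :
    ∀ τ' : Finset T, τ'.card = k →
      (∑ pw : Finset T, P pw * ((symmDiff τ (topk score k pw)).card : ℝ)) ≤
        ∑ pw : Finset T, P pw * ((symmDiff τ' (topk score k pw)).card : ℝ) := by
  intro τ' hτ'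
  set f : T → ℝ := fun t => prRankLe score P t k with hf
  -- key exchange inequality
  have hkey : ∑ t ∈ τ', f t ≤ ∑ t ∈ τ, f t := by
    have hcardAB : (τ' \ τ).card = (τ \ τ').card := by
      have h1 := Finset.card_sdiff_add_card_inter τ' τ
      have h2 := Finset.card_sdiff_add_card_inter τ τ'
      rw [Finset.inter_comm] at h2
      omega
    have hBA : ∑ t ∈ τ' \ τ, f t ≤ ∑ t ∈ τ \ τ', f t := by
      have e : ↥(τ' \ τ) ≃ ↥(τ \ τ') := Finset.equivOfCardEq hcardAB
      calc ∑ t ∈ τ' \ τ, f t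
          = ∑ a : ↥(τ' \ τ), f a := (Finset.sum_coe_sort _ f).symm
        _ = ∑ b : ↥(τ \ τ'), f (e.symm b) :=
            (Equiv.sum_comp e.symm (fun a : ↥(τ' \ τ) => f a)).symm
        _ ≤ ∑ b : ↥(τ \ τ'), f b := by
            refine Finset.sum_le_sum fun b _ => ?_
            have hb : (b : T) ∈ τ \ τ' := b.2
            have ha : ((e.symm b : ↥(τ' \ τ)) : T) ∈ τ' \ τ := (e.symm b).2
            exact hlargest _ (Finset.mem_sdiff.mp hb).1 _ (Finset.mem_sdiff.mp ha).2
        _ = ∑ t ∈ τ \ τ', f t := Finset.sum_coe_sort _ f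
    have h1 := Finset.sum_inter_add_sum_sdiff τ' τ f
    have h2 := Finset.sum_inter_add_sum_sdiff τ τ' f
    have hi : ∑ t ∈ τ' ∩ τ, f t = ∑ t ∈ τ ∩ τ', f t := by rw [Finset.inter_comm]
    linarith
  have expand : ∀ τ'' : Finset T, τ''.card = k →
      ∑ pw : Finset T, P pw * ((symmDiff τ'' (topk score k pw)).card : ℝ)
        = (∑ pw : Finset T, P pw * ((k : ℝ) + ((topk score k pw).card : ℝ)))
            - 2 * ∑ t ∈ τ'', f t := by
    intro τ'' h
    rw [hf, ← sum_inter_topk score P k τ'', Finset.mul_sum, ← Finset.sum_sub_distrib]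
    refine Finset.sum_congr rfl fun pw _ => ?_
    have hn := card_symmDiff_aux τ'' (topk score k pw)
    have hr : ((symmDiff τ'' (topk score k pw)).card : ℝ)
        = (k : ℝ) + ((topk score k pw).card : ℝ)
            - 2 * ((τ'' ∩ topk score k pw).card : ℝ) := by
      have : ((symmDiff τ'' (topk score k pw)).card : ℝ)
          + 2 * ((τ'' ∩ topk score k pw).card : ℝ)
          = (τ''.card : ℝ) + ((topk score k pw).card : ℝ) := by exact_mod_cast hn
      rw [h] at this
      linarith
    rw [hr]
    ring
  rw [expand τ hτ, expand τ' hτ']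
  linarith
end

section
/- In a probabilistic database with possible-worlds distribution Pr, let ω : ℤ⁺ → ℝ≥0 be a weight function with ω(i) = 0 for all i > k, and define Υ_ω(t) = Σ_{i=1}^k ω(i)·Pr(r(t)=i). Then for every subset τ ⊆ T, the expected weighted symmetric difference satisfies E[dis_ω(τ, τ_pw)] = Σ_{t ∈ T∖τ} Υ_ω(t), where dis_ω(τ, τ_pw) = Σ_i ω(i)·1[the i-th tuple of the list τ_pw is not in τ]. -/
open Finset

/-- In a probabilistic database with possible-worlds distribution `P`, let
`ω : ℕ → ℝ≥0` be a weight function with `ω i = 0` for all `i > k`, and define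
`Υ_ω(t) = Σ_{i=1}^k ω i · Pr(r(t) = i)`.  Then for every subset `τ ⊆ T`, the expected
weighted symmetric difference satisfies `E[dis_ω(τ, τ_pw)] = Σ_{t ∈ T∖τ} Υ_ω(t)`, where
`dis_ω(τ, τ_pw) = Σ_i ω i · 1[the i-th tuple of the top-k list τ_pw is not in τ]`,
i.e. `dis_ω(τ, τ_pw) = Σ_{t ∈ τ_pw ∖ τ} ω (r_pw t)`. -/
theorem expected_weighted_symmDiff {T : Type} [Fintype T] [DecidableEq T]
    (score : T → ℝ) (hscore : Function.Injective score)
    (P : Finset T → ℝ) (hP0 : ∀ pw, 0 ≤ P pw) (hP1 : ∑ pw : Finset T, P pw = 1)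
    (k : ℕ) (ω : ℕ → ℝ) (hω0 : ∀ i, 0 ≤ ω i) (hωk : ∀ i, k < i → ω i = 0)
    (τ : Finset T) :
    ∑ pw : Finset T, P pw * ∑ t ∈ (topk score k pw) \ τ, ω (rankIn score pw t) =
      ∑ t ∈ τᶜ, ∑ i ∈ Finset.Icc 1 k, ω i * prRankEq score P t i := by

  have h1 : ∀ pw : Finset T,
      P pw * ∑ t ∈ (topk score k pw) \ τ, ω (rankIn score pw t)
        = ∑ t : T, if t ∈ pw ∧ rankIn score pw t ≤ k ∧ t ∉ τ then
            P pw * ω (rankIn score pw t) else 0 := by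
    intro pw
    rw [Finset.mul_sum, ← Finset.sum_filter]
    apply Finset.sum_congr
    · ext t
      simp [topk, Finset.mem_sdiff, Finset.mem_filter, and_assoc]
    · intros; rfl
  simp_rw [h1]
  rw [Finset.sum_comm]
  rw [← Finset.sum_subset (Finset.subset_univ τᶜ) (by
    intro t _ ht
    simp only [Finset.mem_compl, not_not] at ht
    apply Finset.sum_eq_zero
    intro pw _
    simp [ht])]
  apply Finset.sum_congr rfl
  intro t ht
  rw [Finset.mem_compl] at ht
  have hLt : (∑ pw : Finset T, if t ∈ pw ∧ rankIn score pw t ≤ k ∧ t ∉ τ then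
      P pw * ω (rankIn score pw t) else 0)
      = ∑ pw ∈ Finset.univ.filter (fun pw : Finset T => t ∈ pw ∧ rankIn score pw t ≤ k),
          P pw * ω (rankIn score pw t) := by
    rw [Finset.sum_filter]
    apply Finset.sum_congr rfl
    intro pw _
    by_cases h : t ∈ pw ∧ rankIn score pw t ≤ k <;> simp [h, ht]
  rw [hLt]
  rw [← Finset.sum_fiberwise_of_maps_to (g := fun pw => rankIn score pw t)
      (t := Finset.Icc 1 k) (by
    intro pw hpw
    simp only [Finset.mem_filter] at hpw
    simp only [Finset.mem_Icc]
    exact ⟨Nat.le_add_left 1 _, hpw.2.2⟩)]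
  apply Finset.sum_congr rfl
  intro i hi
  simp only [Finset.mem_Icc] at hi
  rw [prRankEq, Finset.mul_sum, Finset.filter_filter]
  apply Finset.sum_congr
  · ext pw
    simp only [Finset.mem_filter, Finset.mem_univ, true_and]
    constructor
    · rintro ⟨⟨h1, h2⟩, h3⟩; exact ⟨h1, h3⟩
    · rintro ⟨h1, h3⟩; exact ⟨⟨h1, h3 ▸ hi.2⟩, h3⟩
  · intro pw hpw
    simp only [Finset.mem_filter] at hpw
    rw [hpw.2.2, mul_comm]
end

section
/- In a probabilistic database with possible-worlds distribution Pr, let ω : ℤ⁺ → ℝ≥0 be a weight function with ω(i) = 0 for all i > k, and define Υ_ω(t) = Σ_{i=1}^k ω(i)·Pr(r(t)=i). If τ = {τ(1),…,τ(k)} is a set of k tuples having the k largest values of Υ_ω(t) among all tuples of T, then τ minimizes the expected weighted symmetric difference E[dis_ω(τ', τ_pw)] over all subsets τ' ⊆ T with |τ'| = k; i.e., τ is the consensus top-k answer under the weighted symmetric difference dis_ω. -/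
open Finset

/-- In a probabilistic database with possible-worlds distribution `P`, let
`ω : ℕ → ℝ≥0` be a weight function with `ω i = 0` for all `i > k`, and define
`Υ_ω(t) = Σ_{i=1}^k ω i · Pr(r(t) = i)`.  If `τ` is a set of `k` tuples having the `k`
largest values of `Υ_ω(t)` among all tuples of `T`, then `τ` minimizes the expected weighted
symmetric difference `E[dis_ω(τ', τ_pw)]`, with
`dis_ω(τ', τ_pw) = Σ_{t ∈ τ_pw ∖ τ'} ω (r_pw t)`, over all subsets `τ' ⊆ T` with `|τ'| = k`;
i.e. `τ` is the consensus top-`k` answer under the weighted symmetric difference `dis_ω`. -/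
theorem topk_prf_minimizes_expected_weighted_symmDiff {T : Type} [Fintype T] [DecidableEq T]
    (score : T → ℝ) (hscore : Function.Injective score)
    (P : Finset T → ℝ) (hP0 : ∀ pw, 0 ≤ P pw) (hP1 : ∑ pw : Finset T, P pw = 1)
    (k : ℕ) (ω : ℕ → ℝ) (hω0 : ∀ i, 0 ≤ ω i) (hωk : ∀ i, k < i → ω i = 0)
    (τ : Finset T) (hτ : τ.card = k)
    (hlargest : ∀ t ∈ τ, ∀ t' ∉ τ,
      (∑ i ∈ Finset.Icc 1 k, ω i * prRankEq score P t' i) ≤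
        ∑ i ∈ Finset.Icc 1 k, ω i * prRankEq score P t i) :
    ∀ τ' : Finset T, τ'.card = k →
      (∑ pw : Finset T, P pw * ∑ t ∈ (topk score k pw) \ τ, ω (rankIn score pw t)) ≤
        ∑ pw : Finset T, P pw * ∑ t ∈ (topk score k pw) \ τ', ω (rankIn score pw t) := by
  intro τ' hτ'
  set F : T → ℝ := fun t => ∑ i ∈ Finset.Icc 1 k, ω i * prRankEq score P t i with hF
  have hF0 : ∀ t, 0 ≤ F t := by
    intro t
    apply Finset.sum_nonneg
    intro i _
    exact mul_nonneg (hω0 i) (Finset.sum_nonneg fun pw _ => hP0 pw)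
  have key : ∀ σ : Finset T,
      (∑ pw : Finset T, P pw * ∑ t ∈ (topk score k pw) \ σ, ω (rankIn score pw t))
      = ∑ t ∈ Finset.univ \ σ, F t := by
    intro σ
    have hfilter : ∀ pw : Finset T, (topk score k pw) \ σ =
        (Finset.univ \ σ).filter (fun t => t ∈ pw ∧ rankIn score pw t ≤ k) := by
      intro pw
      ext t
      simp [topk, Finset.mem_sdiff, Finset.mem_filter, and_comm, and_assoc]
    calc (∑ pw : Finset T, P pw * ∑ t ∈ (topk score k pw) \ σ, ω (rankIn score pw t))
        = ∑ pw : Finset T, ∑ t ∈ Finset.univ \ σ,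
            (if t ∈ pw ∧ rankIn score pw t ≤ k then P pw * ω (rankIn score pw t) else 0) := by
          refine Finset.sum_congr rfl fun pw _ => ?_
          rw [hfilter pw, Finset.sum_filter, Finset.mul_sum]
          refine Finset.sum_congr rfl fun t _ => ?_
          rw [mul_ite, mul_zero]
      _ = ∑ t ∈ Finset.univ \ σ, ∑ pw : Finset T,
            (if t ∈ pw ∧ rankIn score pw t ≤ k then P pw * ω (rankIn score pw t) else 0) :=
          Finset.sum_comm
      _ = ∑ t ∈ Finset.univ \ σ, F t := by
          refine Finset.sum_congr rfl fun t _ => ?_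
          rw [hF]
          calc (∑ pw : Finset T,
              (if t ∈ pw ∧ rankIn score pw t ≤ k then P pw * ω (rankIn score pw t) else 0))
              = ∑ pw : Finset T, ∑ i ∈ Finset.Icc 1 k,
                  (if t ∈ pw ∧ rankIn score pw t = i then ω i * P pw else 0) := by
                refine Finset.sum_congr rfl fun pw _ => ?_
                by_cases hm : t ∈ pw
                · have hrk : 1 ≤ rankIn score pw t := Nat.le_add_left 1 _
                  simp only [hm, true_and]
                  rw [Finset.sum_ite_eq (Finset.Icc 1 k) (rankIn score pw t)
                    (fun i => ω i * P pw)]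
                  simp [Finset.mem_Icc, hrk, mul_comm]
                · simp [hm]
            _ = ∑ i ∈ Finset.Icc 1 k, ω i * prRankEq score P t i := by
                rw [Finset.sum_comm]
                refine Finset.sum_congr rfl fun i _ => ?_
                rw [prRankEq, Finset.sum_filter, Finset.mul_sum]
                refine Finset.sum_congr rfl fun pw _ => ?_
                split <;> simp
  rw [key τ, key τ']
  have hsub : ∀ σ : Finset T, ∑ t ∈ Finset.univ \ σ, F t
      = (∑ t : T, F t) - ∑ t ∈ σ, F t := by
    intro σ
    rw [eq_sub_iff_add_eq, Finset.sum_sdiff (Finset.subset_univ σ)]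
  rw [hsub τ, hsub τ']
  have main : ∑ t ∈ τ', F t ≤ ∑ t ∈ τ, F t := by
    have hτsplit : ∑ t ∈ τ, F t = (∑ t ∈ τ \ τ', F t) + ∑ t ∈ τ ∩ τ', F t := by
      rw [← Finset.sum_inter_add_sum_sdiff τ τ' F, add_comm]
    have hτ'split : ∑ t ∈ τ', F t = (∑ t ∈ τ' \ τ, F t) + ∑ t ∈ τ ∩ τ', F t := by
      rw [← Finset.sum_inter_add_sum_sdiff τ' τ F, add_comm, Finset.inter_comm]
    rw [hτsplit, hτ'split]
    have hcard : (τ' \ τ).card = (τ \ τ').card := by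
      rw [Finset.card_sdiff_comm]
      omega
    gcongr ?_ + _
    rcases Finset.eq_empty_or_nonempty (τ' \ τ) with he | hne
    · simp [he]
      exact Finset.sum_nonneg fun t _ => hF0 t
    · have hne' : (τ \ τ').Nonempty := by
        rw [← Finset.card_pos, ← hcard, Finset.card_pos]
        exact hne
      obtain ⟨a, ha, hamin⟩ := Finset.exists_min_image (τ \ τ') F hne'
      have ha1 : a ∈ τ := (Finset.mem_sdiff.mp ha).1
      calc ∑ t ∈ τ' \ τ, F t ≤ ∑ _t ∈ τ' \ τ, F a := by
            refine Finset.sum_le_sum fun b hb => ?_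
            exact hlargest a ha1 b (Finset.mem_sdiff.mp hb).2
        _ = (τ \ τ').card • F a := by rw [Finset.sum_const, hcard]
        _ ≤ ∑ t ∈ τ \ τ', F t := Finset.card_nsmul_le_sum _ _ _ hamin
  linarith
end

section
/- In a tuple-independent probabilistic database, for indices i < j with p_i > 0, the ratio ρ_{j,i}(α) = Υ_α(t_j)/Υ_α(t_i) satisfies ρ_{j,i}(α) = (p_j/p_i)·∏_{l=i}^{j−1} (1 − p_l + p_l·α) for every α ∈ (0,1], and α ↦ ρ_{j,i}(α) is a nondecreasing function of α on (0,1] (likewise, for i > j the ratio is nonincreasing in α). -/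
/-- The `PRF^e` value of tuple `t_i`: `Υ_α(t_i) = Σ_{j=1}^n α^j · Pr(r(t_i) = j)`. -/
noncomputable def prfe (n : ℕ) (p : Fin n → ℝ) (i : Fin n) (α : ℝ) : ℝ :=
  ∑ j ∈ Finset.Icc 1 n, α ^ j * posProb n p i j

/-!
Weighting a world by `α ^ rank` turns `Υ_α(t_i)` into a product over independent tuples: each
`t_l` with `l < i` contributes the generating function `1 - p_l + p_l α` of its presence, `t_i`
contributes `p_i`, and every other tuple contributes `1`. Two such products share the factors
indexed by the tuples scoring above both, so the ratio is a product of the factors in between,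
each of which is nonnegative and nondecreasing in `α`.
-/

open Finset

theorem Finset.sum_filter_mem_prod_mul_prod_compl {ι R : Type*} [Fintype ι] [DecidableEq ι]
    [CommSemiring R] (a b : ι → R) (i : ι) :
    ∑ W with i ∈ W, (∏ l ∈ W, a l) * ∏ l ∈ Wᶜ, b l = a i * ∏ l ∈ univ.erase i, (a l + b l) := by
  -- setting `b i = 0` kills exactly the worlds that miss `i`
  have hterm (W : Finset ι) : (if i ∈ W then (∏ l ∈ W, a l) * ∏ l ∈ Wᶜ, b l else 0) =
      (∏ l ∈ W, a l) * ∏ l ∈ Wᶜ, Function.update b i 0 l := by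
    split_ifs with hi
    · congr 1
      exact prod_congr rfl fun l hl =>
        (Function.update_of_ne (ne_of_mem_of_not_mem hi (mem_compl.1 hl)).symm _ _).symm
    · rw [prod_eq_zero (mem_compl.2 hi) (Function.update_self ..), mul_zero]
  rw [sum_filter, Fintype.sum_congr _ _ hterm, ← Fintype.prod_add,
    ← mul_prod_erase univ _ (mem_univ i), Function.update_self, add_zero]
  congr 1
  exact prod_congr rfl fun l hl => by rw [Function.update_of_ne (ne_of_mem_erase hl)]

theorem Finset.prod_Iio_mul_prod_Ico {α M : Type*} [LinearOrder α] [LocallyFiniteOrder α]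
    [LocallyFiniteOrderBot α] [CommMonoid M] (f : α → M) {a b : α} (hab : a ≤ b) :
    (∏ x ∈ Iio a, f x) * ∏ x ∈ Ico a b, f x = ∏ x ∈ Iio b, f x := by
  have hdisj : Disjoint (Iio a) (Ico a b) :=
    disjoint_left.2 fun x hxa hxab => (mem_Ico.1 hxab).1.not_gt (mem_Iio.1 hxa)
  have hunion : Iio a ∪ Ico a b = Iio b := by
    rw [← coe_inj, coe_union, coe_Iio, coe_Ico, coe_Iio, Set.Iio_union_Ico_eq_Iio hab]
  rw [← prod_union hdisj, hunion]

theorem one_sub_add_mul_nonneg {q α : ℝ} (hq0 : 0 ≤ q) (hq1 : q ≤ 1) (hα : 0 ≤ α) :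
    0 ≤ 1 - q + q * α := by
  nlinarith

theorem one_sub_add_mul_pos {q α : ℝ} (hq0 : 0 ≤ q) (hq1 : q ≤ 1) (hα : 0 < α) :
    0 < 1 - q + q * α := by
  rcases hq1.lt_or_eq with hq1 | rfl
  · nlinarith
  · simpa using hα

theorem monotoneOn_prod_one_sub_add_mul {ι : Type*} (s : Finset ι) (q : ι → ℝ)
    (hq : ∀ l ∈ s, 0 ≤ q l ∧ q l ≤ 1) :
    MonotoneOn (fun α => ∏ l ∈ s, (1 - q l + q l * α)) (Set.Ici 0) := by
  intro x hx y _ hxy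
  refine prod_le_prod (fun l hl => one_sub_add_mul_nonneg (hq l hl).1 (hq l hl).2 hx) ?_
  intro l hl
  have := mul_le_mul_of_nonneg_left hxy (hq l hl).1
  linarith

section PRFe

variable {n : ℕ} (p : Fin n → ℝ)

theorem prfe_eq_sum_filter_mem (i : Fin n) (α : ℝ) :
    prfe n p i α = ∑ W with i ∈ W, α ^ (#{l ∈ W | l < i} + 1) * worldProb n p W := by
  have hrank : ∀ W ∈ (univ.filter fun W : Finset (Fin n) => i ∈ W),
      #{l ∈ W | l < i} + 1 ∈ Icc 1 n := by
    intro W _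
    have : #{l ∈ W | l < i} ≤ #(Iio i) :=
      card_le_card fun l hl => mem_Iio.2 (mem_filter.1 hl).2
    rw [Fin.card_Iio] at this
    exact mem_Icc.2 ⟨by omega, by omega⟩
  rw [prfe, ← sum_fiberwise_of_maps_to hrank]
  refine sum_congr rfl fun j _ => ?_
  rw [posProb, mul_sum, filter_filter]
  exact sum_congr rfl fun W hW => by rw [(mem_filter.1 hW).2.2]

theorem prfe_eq (i : Fin n) (α : ℝ) :
    prfe n p i α = α * p i * ∏ l ∈ Iio i, (1 - p l + p l * α) := by
  set a : Fin n → ℝ := fun l => p l * if l < i then α else 1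
  have hworld (W : Finset (Fin n)) : α ^ (#{l ∈ W | l < i} + 1) * worldProb n p W =
      α * ((∏ l ∈ W, a l) * ∏ l ∈ Wᶜ, (1 - p l)) := by
    rw [worldProb, prod_mul_distrib, ← prod_filter, prod_const]
    ring
  have hfactor : ∏ l ∈ univ.erase i, (a l + (1 - p l)) = ∏ l ∈ Iio i, (1 - p l + p l * α) := by
    have hone : ∀ l ∈ univ.erase i, l ∉ Iio i → a l + (1 - p l) = 1 := fun l _ hl => by
      simp [a, mem_Iio.not.1 hl]
    rw [← prod_subset (fun l hl => mem_erase.2 ⟨(mem_Iio.1 hl).ne, mem_univ l⟩) hone]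
    exact prod_congr rfl fun l hl => by simp only [a, if_pos (mem_Iio.1 hl)]; ring
  rw [prfe_eq_sum_filter_mem, sum_congr rfl fun W _ => hworld W, ← mul_sum,
    sum_filter_mem_prod_mul_prod_compl, hfactor]
  simp [a, mul_assoc]

theorem mul_prfe_eq_of_le {i j : Fin n} (hij : i ≤ j) (α : ℝ) :
    p i * prfe n p j α = p j * prfe n p i α * ∏ l ∈ Ico i j, (1 - p l + p l * α) := by
  rw [prfe_eq, prfe_eq, ← prod_Iio_mul_prod_Ico _ hij]
  ring

variable {p} (hp : ∀ l, 0 ≤ p l ∧ p l ≤ 1) {α : ℝ} (hα : 0 < α)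
include hp hα

theorem prod_one_sub_add_mul_pos (s : Finset (Fin n)) : 0 < ∏ l ∈ s, (1 - p l + p l * α) :=
  prod_pos fun l _ => one_sub_add_mul_pos (hp l).1 (hp l).2 hα

theorem prfe_pos {i : Fin n} (hpi : 0 < p i) : 0 < prfe n p i α := by
  rw [prfe_eq]
  exact mul_pos (mul_pos hα hpi) (prod_one_sub_add_mul_pos hp hα _)

theorem prfe_div_prfe_of_le {i j : Fin n} (hij : i ≤ j) (hpi : 0 < p i) :
    prfe n p j α / prfe n p i α = p j / p i * ∏ l ∈ Ico i j, (1 - p l + p l * α) := by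
  have key := mul_prfe_eq_of_le p hij α
  rw [div_mul_eq_mul_div, div_eq_div_iff (prfe_pos hp hα hpi).ne' hpi.ne']
  linear_combination key

theorem prfe_div_prfe_of_ge {i j : Fin n} (hji : j ≤ i) (hpi : 0 < p i) :
    prfe n p j α / prfe n p i α = p j / (p i * ∏ l ∈ Ico j i, (1 - p l + p l * α)) := by
  have key := mul_prfe_eq_of_le p hji α
  have hden := mul_pos hpi (prod_one_sub_add_mul_pos hp hα (Ico j i))
  rw [div_eq_div_iff (prfe_pos hp hα hpi).ne' hden.ne']
  linear_combination -key

end PRFe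

/-- In a tuple-independent probabilistic database, for indices `i < j` with
`p i > 0`, the ratio `ρ_{j,i}(α) = Υ_α(t_j) / Υ_α(t_i)` satisfies
`ρ_{j,i}(α) = (p j / p i) · ∏_{l=i}^{j-1} (1 − p l + p l · α)` for every `α ∈ (0,1]`, and
`α ↦ ρ_{j,i}(α)` is nondecreasing on `(0,1]`; likewise, for `i > j` the ratio is
nonincreasing in `α` on `(0,1]`. -/
theorem prfe_ratio_formula_and_monotone
    (n : ℕ) (p : Fin n → ℝ) (hp : ∀ l, 0 ≤ p l ∧ p l ≤ 1)
    (i j : Fin n) (hij : i < j) (hpi : 0 < p i) :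
    (∀ α ∈ Set.Ioc (0 : ℝ) 1,
        prfe n p j α / prfe n p i α =
          p j / p i * ∏ l ∈ Finset.Ico i j, (1 - p l + p l * α))
    ∧ MonotoneOn (fun α => prfe n p j α / prfe n p i α) (Set.Ioc (0 : ℝ) 1)
    ∧ (∀ i' j' : Fin n, j' < i' → 0 < p i' →
        AntitoneOn (fun α => prfe n p j' α / prfe n p i' α) (Set.Ioc (0 : ℝ) 1)) := by
  have hmono (s : Finset (Fin n)) :
      MonotoneOn (fun α => ∏ l ∈ s, (1 - p l + p l * α)) (Set.Ioc 0 1) :=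
    (monotoneOn_prod_one_sub_add_mul s p fun l _ => hp l).mono fun α hα => hα.1.le
  refine ⟨fun α hα => prfe_div_prfe_of_le hp hα.1 hij.le hpi, ?_, ?_⟩
  · intro x hx y hy hxy
    dsimp only
    rw [prfe_div_prfe_of_le hp hx.1 hij.le hpi, prfe_div_prfe_of_le hp hy.1 hij.le hpi]
    exact mul_le_mul_of_nonneg_left (hmono _ hx hy hxy) (div_nonneg (hp j).1 hpi.le)
  · intro i' j' hji hpi' x hx y hy hxy
    dsimp only
    rw [prfe_div_prfe_of_ge hp hx.1 hji.le hpi', prfe_div_prfe_of_ge hp hy.1 hji.le hpi']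
    exact div_le_div_of_nonneg_left (hp j').1 (mul_pos hpi' (prod_one_sub_add_mul_pos hp hx.1 _))
      (mul_le_mul_of_nonneg_left (hmono _ hx hy hxy) hpi'.le)
end

section
/- In a tuple-independent probabilistic database, let t_i and t_j be distinct tuples such that t_i is ranked above t_j both by top-1 probability and by existence probability, i.e., Pr(r(t_i)=1) > Pr(r(t_j)=1) and p_i > p_j, where Pr(r(t_i)=1) = p_i·∏_{l<i}(1−p_l). Then Υ_α(t_i) > Υ_α(t_j) for every α ∈ (0,1]; i.e., t_i is ranked above t_j by PRF^e(α) for all 0 < α ≤ 1. -/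
lemma sum_world (n : ℕ) (F G : Fin n → ℝ) (i : Fin n) :
    ∑ W ∈ Finset.univ.filter (fun W : Finset (Fin n) => i ∈ W),
      (∏ l ∈ W, F l) * ∏ l ∈ Wᶜ, G l
    = F i * ∏ l ∈ Finset.univ.erase i, (F l + G l) := by
  classical
  rw [Finset.prod_add, Finset.mul_sum]
  refine Finset.sum_bij' (fun W _ => W.erase i) (fun t _ => insert i t) ?_ ?_ ?_ ?_ ?_
  · intro W hW
    simp only [Finset.mem_filter, Finset.mem_univ, true_and] at hW
    simp only [Finset.mem_powerset]
    exact Finset.erase_subset_erase i (Finset.subset_univ W)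
  · intro t ht
    simp
  · intro W hW
    simp only [Finset.mem_filter, Finset.mem_univ, true_and] at hW
    exact Finset.insert_erase hW
  · intro t ht
    simp only [Finset.mem_powerset] at ht
    have hi : i ∉ t := fun h => (Finset.mem_erase.mp (ht h)).1 rfl
    exact Finset.erase_insert hi
  · intro W hW
    simp only [Finset.mem_filter, Finset.mem_univ, true_and] at hW
    have h1 : (∏ l ∈ W, F l) = F i * ∏ l ∈ W.erase i, F l :=
      (Finset.mul_prod_erase W F hW).symm
    have h2 : Wᶜ = (Finset.univ.erase i) \ (W.erase i) := by
      ext l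
      simp only [Finset.mem_compl, Finset.mem_sdiff, Finset.mem_erase, Finset.mem_univ,
        and_true, true_and]
      constructor
      · intro h; exact ⟨fun he => h (he ▸ hW), fun ⟨hne, hm⟩ => h hm⟩
      · rintro ⟨hne, h⟩ hm; exact h ⟨hne, hm⟩
    rw [h1, h2]; ring

lemma sum_key (n : ℕ) (p : Fin n → ℝ) (i : Fin n) (α : ℝ) :
    ∑ W ∈ Finset.univ.filter (fun W : Finset (Fin n) => i ∈ W),
      α ^ (W.filter (fun l => l < i)).card * worldProb n p W
    = p i * ∏ l ∈ Finset.univ.filter (fun l => l < i), (1 - p l + p l * α) := by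
  classical
  have hterm : ∀ W ∈ Finset.univ.filter (fun W : Finset (Fin n) => i ∈ W),
      α ^ (W.filter (fun l => l < i)).card * worldProb n p W
      = (∏ l ∈ W, (if l < i then α else 1) * p l) * ∏ l ∈ Wᶜ, (1 - p l) := by
    intro W _
    have h : (α : ℝ) ^ (W.filter (fun l => l < i)).card
        = ∏ l ∈ W, (if l < i then α else 1) := by
      rw [← Finset.prod_const, Finset.prod_filter]
    rw [worldProb, h, ← mul_assoc, ← Finset.prod_mul_distrib]
  rw [Finset.sum_congr rfl hterm, sum_world]
  have hFi : (if i < i then α else 1) * p i = p i := by simp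
  have hprod : ∏ l ∈ Finset.univ.erase i, ((if l < i then α else 1) * p l + (1 - p l))
      = ∏ l ∈ Finset.univ.filter (fun l => l < i), (1 - p l + p l * α) := by
    have h1 : ∀ l ∈ Finset.univ.erase i,
        (if l < i then α else 1) * p l + (1 - p l)
        = if l < i then (1 - p l + p l * α) else 1 := by
      intro l _
      by_cases h : l < i <;> simp [h] <;> ring
    rw [Finset.prod_congr rfl h1, ← Finset.prod_filter]
    congr 1
    ext l
    simp only [Finset.mem_filter, Finset.mem_erase, Finset.mem_univ, and_true, true_and]
    constructor
    · exact fun h => h.2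
    · exact fun h => ⟨ne_of_lt h, h⟩
  rw [hFi, hprod]

lemma card_bound (n : ℕ) (p : Fin n → ℝ) (i : Fin n) (W : Finset (Fin n)) :
    (W.filter (fun l => l < i)).card + 1 ≤ n := by
  have hsub : W.filter (fun l => l < i) ⊆ Finset.univ.erase i := by
    intro l hl
    simp only [Finset.mem_filter] at hl
    exact Finset.mem_erase.mpr ⟨ne_of_lt hl.2, Finset.mem_univ l⟩
  have h1 := Finset.card_le_card hsub
  have h2 : (Finset.univ.erase i).card = n - 1 := by
    rw [Finset.card_erase_of_mem (Finset.mem_univ i), Finset.card_univ, Fintype.card_fin]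
  have h3 : 0 < n := i.pos
  omega

lemma prfe_closed (n : ℕ) (p : Fin n → ℝ) (i : Fin n) (α : ℝ) :
    prfe n p i α
    = α * (p i * ∏ l ∈ Finset.univ.filter (fun l => l < i), (1 - p l + p l * α)) := by
  classical
  rw [← sum_key]
  unfold prfe posProb
  have hfilt : ∀ j : ℕ, Finset.univ.filter (fun W : Finset (Fin n) =>
      i ∈ W ∧ (W.filter (fun l => l < i)).card + 1 = j)
      = (Finset.univ.filter (fun W : Finset (Fin n) => i ∈ W)).filter
          (fun W => (W.filter (fun l => l < i)).card + 1 = j) := by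
    intro j; rw [Finset.filter_filter]
  have step1 : ∀ j ∈ Finset.Icc 1 n,
      α ^ j * ∑ W ∈ Finset.univ.filter (fun W : Finset (Fin n) =>
        i ∈ W ∧ (W.filter (fun l => l < i)).card + 1 = j), worldProb n p W
      = ∑ W ∈ (Finset.univ.filter (fun W : Finset (Fin n) => i ∈ W)).filter
          (fun W => (W.filter (fun l => l < i)).card + 1 = j),
          α ^ ((W.filter (fun l => l < i)).card + 1) * worldProb n p W := by
    intro j _
    rw [hfilt j, Finset.mul_sum]
    refine Finset.sum_congr rfl fun W hW => ?_
    simp only [Finset.mem_filter] at hW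
    rw [hW.2]
  rw [Finset.sum_congr rfl step1]
  rw [Finset.sum_fiberwise_of_maps_to (fun W hW => ?_)
    (fun W => α ^ ((W.filter (fun l => l < i)).card + 1) * worldProb n p W)]
  · rw [Finset.mul_sum]
    refine Finset.sum_congr rfl fun W _ => ?_
    rw [pow_succ]; ring
  · simp only [Finset.mem_Icc]
    exact ⟨Nat.le_add_left 1 _, card_bound n p i W⟩

lemma posProb_one (n : ℕ) (p : Fin n → ℝ) (i : Fin n) :
    posProb n p i 1 = p i * ∏ l ∈ Finset.univ.filter (fun l => l < i), (1 - p l) := by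
  classical
  have h := sum_key n p i 0
  have hrhs : ∏ l ∈ Finset.univ.filter (fun l => l < i), (1 - p l + p l * 0)
      = ∏ l ∈ Finset.univ.filter (fun l => l < i), (1 - p l) := by
    refine Finset.prod_congr rfl fun l _ => by ring
  rw [hrhs] at h
  rw [← h]
  unfold posProb
  rw [← Finset.filter_filter (fun W : Finset (Fin n) => i ∈ W)
    (fun W => (W.filter (fun l => l < i)).card + 1 = 1) Finset.univ]
  rw [Finset.sum_filter]
  refine Finset.sum_congr rfl fun W hW => ?_
  by_cases hc : (W.filter (fun l => l < i)).card = 0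
  · simp [hc]
  · have : (W.filter (fun l => l < i)).card + 1 ≠ 1 := by omega
    rw [if_neg this, zero_pow hc, zero_mul]

lemma filter_split (n : ℕ) {i j : Fin n} (hji : j < i) (f : Fin n → ℝ) :
    ∏ l ∈ Finset.univ.filter (fun l => l < i), f l
    = (∏ l ∈ Finset.univ.filter (fun l => l < j), f l) *
      ∏ l ∈ (Finset.univ.filter (fun l : Fin n => l < i)).filter (fun l => ¬ l < j), f l := by
  classical
  rw [← Finset.prod_filter_mul_prod_filter_not (Finset.univ.filter (fun l : Fin n => l < i))
    (fun l => l < j) f]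
  congr 2
  rw [Finset.filter_filter]
  ext l
  simp only [Finset.mem_filter, Finset.mem_univ, true_and]
  exact ⟨fun h => h.2, fun h => ⟨lt_trans h hji, h⟩⟩

/-- In a tuple-independent probabilistic database, let `t_i` and `t_j` be
distinct tuples such that `t_i` is ranked above `t_j` both by top-1 probability and by
existence probability, i.e. `Pr(r(t_i)=1) > Pr(r(t_j)=1)` and `p i > p j`.  Then
`Υ_α(t_i) > Υ_α(t_j)` for every `α ∈ (0,1]`; i.e. `t_i` is ranked above `t_j` by
`PRF^e(α)` for all `0 < α ≤ 1`. -/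
theorem prfe_gt_of_top1_and_prob_gt
    (n : ℕ) (p : Fin n → ℝ) (hp : ∀ l, 0 ≤ p l ∧ p l ≤ 1)
    (i j : Fin n) (hij : i ≠ j)
    (htop1 : posProb n p j 1 < posProb n p i 1) (hprob : p j < p i) :
    ∀ α ∈ Set.Ioc (0 : ℝ) 1, prfe n p j α < prfe n p i α := by
  classical
  rintro α ⟨hα0, hα1⟩
  rw [prfe_closed, prfe_closed]
  refine mul_lt_mul_of_pos_left ?_ hα0
  set Q : Fin n → ℝ := fun l => 1 - p l + p l * α with hQ
  have hQpos : ∀ l, 0 < Q l := by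
    intro l
    have h1 := (hp l).1; have h2 := (hp l).2
    have : α ≤ Q l := by simp only [hQ]; nlinarith
    linarith
  have hQle1 : ∀ l, Q l ≤ 1 := by
    intro l; have h1 := (hp l).1; simp only [hQ]; nlinarith
  have hQge : ∀ l, 1 - p l ≤ Q l := by
    intro l; have h1 := (hp l).1; simp only [hQ]; nlinarith
  have h1p : ∀ l, (0:ℝ) ≤ 1 - p l := fun l => by linarith [(hp l).2]
  rcases lt_or_gt_of_ne hij with hlt | hgt
  · -- i < j
    have hsplit := filter_split n hlt Q
    set A := ∏ l ∈ Finset.univ.filter (fun l : Fin n => l < i), Q l with hA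
    set C := ∏ l ∈ (Finset.univ.filter (fun l : Fin n => l < j)).filter (fun l => ¬ l < i), Q l
      with hC
    have hApos : 0 < A := Finset.prod_pos fun l _ => hQpos l
    have hCpos : 0 < C := Finset.prod_pos fun l _ => hQpos l
    have hCle1 : C ≤ 1 := Finset.prod_le_one (fun l _ => le_of_lt (hQpos l))
      (fun l _ => hQle1 l)
    have hpj : 0 ≤ p j := (hp j).1
    rw [hsplit]
    have h1 : p j * (A * C) ≤ p j * A := by
      have := mul_nonneg (mul_nonneg hpj hApos.le) (by linarith : (0:ℝ) ≤ 1 - C)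
      nlinarith
    have h2 : p j * A < p i * A := mul_lt_mul_of_pos_right hprob hApos
    linarith
  · -- j < i
    have hsplitQ := filter_split n hgt Q
    have hsplitP := filter_split n hgt (fun l => 1 - p l)
    rw [posProb_one, posProb_one, hsplitP] at htop1
    set B := ∏ l ∈ Finset.univ.filter (fun l : Fin n => l < j), Q l with hB
    set C := ∏ l ∈ (Finset.univ.filter (fun l : Fin n => l < i)).filter (fun l => ¬ l < j), Q l
      with hC
    set B' := ∏ l ∈ Finset.univ.filter (fun l : Fin n => l < j), (1 - p l) with hB'
    set C' := ∏ l ∈ (Finset.univ.filter (fun l : Fin n => l < i)).filter (fun l => ¬ l < j),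
      (1 - p l) with hC'
    have hBpos : 0 < B := Finset.prod_pos fun l _ => hQpos l
    have hCpos : 0 < C := Finset.prod_pos fun l _ => hQpos l
    have hB'0 : 0 ≤ B' := Finset.prod_nonneg fun l _ => h1p l
    have hC'0 : 0 ≤ C' := Finset.prod_nonneg fun l _ => h1p l
    have hC'C : C' ≤ C := Finset.prod_le_prod (fun l _ => h1p l) (fun l _ => hQge l)
    have hpj : 0 ≤ p j := (hp j).1
    have hpi : 0 < p i := lt_of_le_of_lt hpj hprob
    rw [hsplitQ]
    rcases eq_or_lt_of_le hB'0 with hB'z | hB'pos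
    · exfalso; rw [← hB'z] at htop1; nlinarith
    · have h1 : p j < p i * C' := by nlinarith
      have h2 : p i * C' ≤ p i * C := by nlinarith
      nlinarith
end

section
/- In a tuple-independent probabilistic database, let t_i and t_j be distinct tuples such that t_i is ranked above t_j by top-1 probability but below t_j by existence probability, i.e., Pr(r(t_i)=1) > Pr(r(t_j)=1) and p_i < p_j, where Pr(r(t_i)=1) = p_i·∏_{l<i}(1−p_l). Then there exists exactly one β ∈ (0,1) such that Υ_β(t_i) = Υ_β(t_j); moreover Υ_α(t_i) > Υ_α(t_j) for all α ∈ (0,β) and Υ_α(t_i) < Υ_α(t_j) for all α ∈ (β,1]. -/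
/-!
Expanding `worldProb` as a product, `Υ_α(t_i) = p_i α ∏_{l<i} (1 - p_l + p_l α)`. For `i < j`
this gives `Υ_α(t_i) - Υ_α(t_j) = α ∏_{l<i} (1 - p_l + p_l α) · (p_i - p_j G(α))` with
`G(α) = ∏_{i≤l<j} (1 - p_l + p_l α)`. The first factor is positive on `(0,1]`, and `G` is
strictly increasing there with `G(1) = 1`, so the difference has the sign of a continuous
strictly decreasing function that is positive at `0` (this is `Pr(r(t_i)=1) > Pr(r(t_j)=1)`)
and negative at `1` (this is `p_i < p_j`). The top-1 hypothesis also forces `i < j`, since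
moving down the ranking without gaining existence probability can only lower the top-1
probability.
-/

open Finset

lemma sum_prod_mul_prod_compl_mul_worldProb (n : ℕ) (p a b : Fin n → ℝ) :
    ∑ W, (∏ l ∈ W, a l) * (∏ l ∈ Wᶜ, b l) * worldProb n p W
      = ∏ l, (p l * a l + (1 - p l) * b l) := by
  rw [prod_add, powerset_univ]
  refine sum_congr rfl fun W _ => ?_
  rw [worldProb, ← compl_eq_univ_sdiff, prod_mul_distrib, prod_mul_distrib]
  ring

lemma sum_pow_card_lt_mul_worldProb (n : ℕ) (p : Fin n → ℝ) (i : Fin n) (x : ℝ) :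
    ∑ W ∈ univ.filter (i ∈ ·), x ^ (W.filter (· < i)).card * worldProb n p W
      = p i * ∏ l ∈ Iio i, (1 - p l + p l * x) := by
  -- The zero weight at `i` discards the worlds that miss `t_i`.
  have hweight (W : Finset (Fin n)) :
      (∏ l ∈ W, if l < i then x else 1) * (∏ l ∈ Wᶜ, if l = i then 0 else 1)
        = if i ∈ W then x ^ (W.filter (· < i)).card else 0 := by
    rw [prod_ite_eq', ← prod_filter, prod_const]
    by_cases h : i ∈ W <;> simp [h]
  have h := sum_prod_mul_prod_compl_mul_worldProb n p (fun l => if l < i then x else 1)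
    (fun l => if l = i then 0 else 1)
  simp_rw [hweight, ite_mul, zero_mul, ← sum_filter] at h
  rw [h, ← prod_filter_mul_prod_filter_not univ (· < i), filter_gt_eq_Iio, mul_comm]
  congr 1
  · rw [prod_congr rfl (g := fun l => if l = i then p l else 1), prod_ite_eq',
      if_pos (by simp)]
    intro l hl
    have : ¬ l < i := (mem_filter.1 hl).2
    by_cases h : l = i <;> simp [h, this]
  · refine prod_congr rfl fun l hl => ?_
    have hl : l < i := mem_Iio.1 hl
    rw [if_pos hl, if_neg hl.ne]
    ring

lemma card_filter_lt_add_one_mem_Icc {n : ℕ} (i : Fin n) (W : Finset (Fin n)) :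
    (W.filter (· < i)).card + 1 ∈ Icc 1 n := by
  have : (W.filter (· < i)).card ≤ i := by
    simpa using card_le_card
      (fun l hl => mem_Iio.2 (mem_filter.1 hl).2 : W.filter (· < i) ⊆ Iio i)
  simp only [mem_Icc]
  omega

lemma prfe_eq_sum (n : ℕ) (p : Fin n → ℝ) (i : Fin n) (α : ℝ) :
    prfe n p i α =
      ∑ W ∈ univ.filter (i ∈ ·), α ^ ((W.filter (· < i)).card + 1) * worldProb n p W := by
  simp_rw [prfe, posProb, mul_sum, ← filter_filter]
  rw [← sum_fiberwise_of_maps_to (fun W _ => card_filter_lt_add_one_mem_Icc i W)]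
  refine sum_congr rfl fun j _ => sum_congr rfl fun W hW => ?_
  rw [(mem_filter.1 hW).2]

lemma prfe_eq_mul_prod (n : ℕ) (p : Fin n → ℝ) (i : Fin n) (α : ℝ) :
    prfe n p i α = p i * α * ∏ l ∈ Iio i, (1 - p l + p l * α) := by
  simp_rw [prfe_eq_sum, pow_succ, mul_right_comm _ α, ← sum_mul, sum_pow_card_lt_mul_worldProb]

lemma posProb_one_eq (n : ℕ) (p : Fin n → ℝ) (i : Fin n) :
    posProb n p i 1 = p i * ∏ l ∈ Iio i, (1 - p l) := by
  simpa [posProb, zero_pow_eq, sum_filter, ite_and] using sum_pow_card_lt_mul_worldProb n p i 0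

lemma posProb_one_le_of_le {n : ℕ} {p : Fin n → ℝ} (hp : ∀ l, 0 ≤ p l ∧ p l ≤ 1)
    {i j : Fin n} (hji : j ≤ i) (hpij : p i ≤ p j) : posProb n p i 1 ≤ posProb n p j 1 := by
  have h0 (l : Fin n) : 0 ≤ 1 - p l := sub_nonneg.2 (hp l).2
  rw [posProb_one_eq, posProb_one_eq]
  calc p i * ∏ l ∈ Iio i, (1 - p l)
      ≤ p i * ∏ l ∈ Iio j, (1 - p l) :=
        mul_le_mul_of_nonneg_left (prod_le_prod_of_subset_of_le_one (Iio_subset_Iio hji)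
          (fun l _ => h0 l) (fun l _ _ => by linarith [(hp l).1])) (hp i).1
    _ ≤ p j * ∏ l ∈ Iio j, (1 - p l) :=
        mul_le_mul_of_nonneg_right hpij (prod_nonneg fun l _ => h0 l)

lemma prod_Iio_eq_mul_prod_Ico {n : ℕ} {i j : Fin n} (hij : i ≤ j) (f : Fin n → ℝ) :
    ∏ l ∈ Iio j, f l = (∏ l ∈ Iio i, f l) * ∏ l ∈ Ico i j, f l := by
  have hunion : Iio i ∪ Ico i j = Iio j := by
    rw [← coe_inj, coe_union, coe_Iio, coe_Ico, coe_Iio, Set.Iio_union_Ico_eq_Iio hij]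
  rw [← hunion, prod_union <|
    disjoint_left.2 fun l hl hl' => (mem_Ico.1 hl').1.not_gt (mem_Iio.1 hl)]

lemma prfe_sub_prfe {n : ℕ} (p : Fin n → ℝ) {i j : Fin n} (hij : i ≤ j) (α : ℝ) :
    prfe n p i α - prfe n p j α = α * (∏ l ∈ Iio i, (1 - p l + p l * α)) *
      (p i - p j * ∏ l ∈ Ico i j, (1 - p l + p l * α)) := by
  rw [prfe_eq_mul_prod, prfe_eq_mul_prod, prod_Iio_eq_mul_prod_Ico hij]
  ring

lemma posProb_one_sub_posProb_one {n : ℕ} (p : Fin n → ℝ) {i j : Fin n} (hij : i ≤ j) :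
    posProb n p i 1 - posProb n p j 1 =
      (∏ l ∈ Iio i, (1 - p l)) * (p i - p j * ∏ l ∈ Ico i j, (1 - p l)) := by
  rw [posProb_one_eq, posProb_one_eq, prod_Iio_eq_mul_prod_Ico hij]
  ring

lemma le_one_sub_add_mul {q α : ℝ} (hq : q ≤ 1) (hα : α ≤ 1) : α ≤ 1 - q + q * α := by
  nlinarith

lemma strictMonoOn_prod_one_sub_add_mul {ι : Type*} {s : Finset ι} {q : ι → ℝ}
    (hq : ∀ l ∈ s, 0 ≤ q l ∧ q l ≤ 1) (hpos : ∃ l ∈ s, 0 < q l) :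
    StrictMonoOn (fun α => ∏ l ∈ s, (1 - q l + q l * α)) (Set.Ioc 0 1) := by
  intro a ha b _ hab
  refine prod_lt_prod (fun l hl => ha.1.trans_le (le_one_sub_add_mul (hq l hl).2 ha.2))
    (fun l hl => by nlinarith [hq l hl]) ?_
  obtain ⟨l, hl, hql⟩ := hpos
  exact ⟨l, hl, by nlinarith⟩

lemma exists_unique_crossing_of_sub_eq_mul {f g w R : ℝ → ℝ}
    (hfg : ∀ α ∈ Set.Ioc (0 : ℝ) 1, f α - g α = w α * R α)
    (hw : ∀ α ∈ Set.Ioc (0 : ℝ) 1, 0 < w α) (hR : ContinuousOn R (Set.Icc 0 1))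
    (hanti : StrictAntiOn R (Set.Ioc 0 1)) (h0 : 0 < R 0) (h1 : R 1 < 0) :
    ∃ β ∈ Set.Ioo (0 : ℝ) 1, f β = g β ∧
      (∀ β' ∈ Set.Ioo (0 : ℝ) 1, f β' = g β' → β' = β) ∧
      (∀ α ∈ Set.Ioo (0 : ℝ) β, g α < f α) ∧
      (∀ α ∈ Set.Ioc β 1, f α < g α) := by
  obtain ⟨β, hβ, hRβ⟩ := intermediate_value_Ioo' zero_le_one hR ⟨h1, h0⟩
  have hβ' : β ∈ Set.Ioc 0 1 := Set.Ioo_subset_Ioc_self hβ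
  have below : ∀ α ∈ Set.Ioc 0 1, α < β → g α < f α := fun α hα hlt => by
    have := mul_pos (hw α hα) (hRβ ▸ hanti hα hβ' hlt)
    linarith [hfg α hα]
  have above : ∀ α ∈ Set.Ioc 0 1, β < α → f α < g α := fun α hα hlt => by
    have := mul_neg_of_pos_of_neg (hw α hα) (hRβ ▸ hanti hβ' hα hlt)
    linarith [hfg α hα]
  refine ⟨β, hβ, by linarith [hfg β hβ', mul_eq_zero_of_right (w β) hRβ], ?_,
    fun α hα => below α ⟨hα.1, hα.2.le.trans hβ.2.le⟩ hα.2,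
    fun α hα => above α ⟨hβ.1.trans hα.1, hα.2⟩ hα.1⟩
  intro β' hβ' heq
  by_contra hne
  rcases lt_or_gt_of_ne hne with hlt | hlt
  · exact (below β' (Set.Ioo_subset_Ioc_self hβ') hlt).ne' heq
  · exact (above β' (Set.Ioo_subset_Ioc_self hβ') hlt).ne heq

theorem prfe_unique_crossing_general
    (n : ℕ) (p : Fin n → ℝ) (hp : ∀ l, 0 ≤ p l ∧ p l ≤ 1)
    (i j : Fin n)
    (htop1 : posProb n p j 1 < posProb n p i 1) (hprob : p i < p j) :
    ∃ β ∈ Set.Ioo (0 : ℝ) 1,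
      prfe n p i β = prfe n p j β ∧
      (∀ β' ∈ Set.Ioo (0 : ℝ) 1, prfe n p i β' = prfe n p j β' → β' = β) ∧
      (∀ α ∈ Set.Ioo (0 : ℝ) β, prfe n p j α < prfe n p i α) ∧
      (∀ α ∈ Set.Ioc β 1, prfe n p i α < prfe n p j α) := by
  have hij : i < j := lt_of_not_ge fun hji => (posProb_one_le_of_le hp hji hprob.le).not_gt htop1
  set R : ℝ → ℝ := fun α => p i - p j * ∏ l ∈ Ico i j, (1 - p l + p l * α) with hR
  have hR0 : 0 < R 0 := by
    have h := posProb_one_sub_posProb_one p hij.le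
    refine pos_of_mul_pos_right (a := ∏ l ∈ Iio i, (1 - p l)) ?_
      (prod_nonneg fun l _ => sub_nonneg.2 (hp l).2)
    simpa [hR, ← h] using htop1
  have hpj : 0 < p j := (hp i).1.trans_lt hprob
  have hpi : 0 < p i := by
    have : 0 ≤ p j * ∏ l ∈ Ico i j, (1 - p l + p l * 0) :=
      mul_nonneg hpj.le (prod_nonneg fun l _ => by simpa using (hp l).2)
    linarith
  have hG :=
    strictMonoOn_prod_one_sub_add_mul (fun l _ => hp l) ⟨i, mem_Ico.2 ⟨le_rfl, hij⟩, hpi⟩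
  refine exists_unique_crossing_of_sub_eq_mul (R := R)
    (fun α _ => prfe_sub_prfe p hij.le α) (fun α hα => ?_) (by fun_prop)
    (fun a ha b hb hab => ?_) hR0 (by simpa [hR] using hprob)
  · exact mul_pos hα.1 (prod_pos fun l _ => hα.1.trans_le (le_one_sub_add_mul (hp l).2 hα.2))
  · simpa [hR] using mul_lt_mul_of_pos_left (hG ha hb hab) hpj

/-- In a tuple-independent probabilistic database, let `t_i` and `t_j` be
distinct tuples such that `t_i` is ranked above `t_j` by top-1 probability but below `t_j`
by existence probability, i.e. `Pr(r(t_i)=1) > Pr(r(t_j)=1)` and `p i < p j`.  Then there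
exists exactly one `β ∈ (0,1)` with `Υ_β(t_i) = Υ_β(t_j)`; moreover `Υ_α(t_i) > Υ_α(t_j)`
for all `α ∈ (0,β)` and `Υ_α(t_i) < Υ_α(t_j)` for all `α ∈ (β,1]`. -/
theorem prfe_unique_crossing
    (n : ℕ) (p : Fin n → ℝ) (hp : ∀ l, 0 ≤ p l ∧ p l ≤ 1)
    (i j : Fin n) (hij : i ≠ j)
    (htop1 : posProb n p j 1 < posProb n p i 1) (hprob : p i < p j) :
    ∃ β ∈ Set.Ioo (0 : ℝ) 1,
      prfe n p i β = prfe n p j β ∧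
      (∀ β' ∈ Set.Ioo (0 : ℝ) 1, prfe n p i β' = prfe n p j β' → β' = β) ∧
      (∀ α ∈ Set.Ioo (0 : ℝ) β, prfe n p j α < prfe n p i α) ∧
      (∀ α ∈ Set.Ioc β 1, prfe n p i α < prfe n p j α) :=
  prfe_unique_crossing_general n p hp i j htop1 hprob
end

section
/- In a tuple-independent probabilistic database, if tuple t_i dominates tuple t_j — that is, i < j (so t_i has the higher score) and p_i ≥ p_j — then Υ_α(t_i) ≥ Υ_α(t_j) for every α ∈ [0,1]; i.e., t_i is always ranked at least as high as t_j by PRF^e(α) for any α. -/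
lemma prfe_closed_form (n : ℕ) (p : Fin n → ℝ) (i : Fin n) (α : ℝ) :
    prfe n p i α = α * p i * ∏ l ∈ Finset.Iio i, (1 - p l + p l * α) := by
  classical
  -- step 1: rewrite prfe as a single sum over worlds containing i
  have hrank : ∀ W : Finset (Fin n), i ∈ W →
      (W.filter (fun l => l < i)).card + 1 ∈ Finset.Icc 1 n := by
    intro W _
    have hsub : W.filter (fun l => l < i) ⊆ Finset.univ.erase i := by
      intro l hl
      simp only [Finset.mem_filter] at hl
      exact Finset.mem_erase.2 ⟨hl.2.ne, Finset.mem_univ l⟩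
    have hc : (W.filter (fun l => l < i)).card ≤ n - 1 := by
      calc (W.filter (fun l => l < i)).card ≤ (Finset.univ.erase i).card :=
            Finset.card_le_card hsub
        _ = n - 1 := by simp [Finset.card_erase_of_mem]
    have hn : 1 ≤ n := Nat.one_le_iff_ne_zero.2 (by rintro rfl; exact i.elim0)
    simp only [Finset.mem_Icc]
    omega
  have step1 : prfe n p i α =
      ∑ W ∈ Finset.univ.filter (fun W : Finset (Fin n) => i ∈ W),
        α ^ ((W.filter (fun l => l < i)).card + 1) * worldProb n p W := by
    unfold prfe posProb
    rw [← Finset.sum_fiberwise_of_maps_to (g := fun W : Finset (Fin n) =>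
      (W.filter (fun l => l < i)).card + 1)
      (fun W hW => hrank W (Finset.mem_filter.1 hW).2)
      (fun W => α ^ ((W.filter (fun l => l < i)).card + 1) * worldProb n p W)]
    refine Finset.sum_congr rfl fun j _ => ?_
    rw [Finset.mul_sum, Finset.filter_filter]
    refine Finset.sum_congr rfl fun W hW => ?_
    simp only [Finset.mem_filter] at hW
    rw [hW.2.2]
  -- step 2: reindex over subsets of univ.erase i
  have step2 : prfe n p i α =
      ∑ S ∈ (Finset.univ.erase i).powerset,
        α ^ ((S.filter (fun l => l < i)).card + 1)
          * (p i * (∏ l ∈ S, p l) * ∏ l ∈ Sᶜ.erase i, (1 - p l)) := by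
    rw [step1]
    refine Finset.sum_nbij' (fun W => W.erase i) (fun S => insert i S) ?_ ?_ ?_ ?_ ?_
    · intro W hW
      simp only [Finset.mem_filter] at hW
      exact Finset.mem_powerset.2 (fun l hl =>
        Finset.mem_erase.2 ⟨(Finset.mem_erase.1 hl).1, Finset.mem_univ l⟩)
    · intro S _
      simp
    · intro W hW
      simp only [Finset.mem_filter] at hW
      exact Finset.insert_erase hW.2
    · intro S hS
      have : i ∉ S := fun h =>
        (Finset.mem_erase.1 (Finset.mem_powerset.1 hS h)).1 rfl
      exact Finset.erase_insert this
    · intro W hW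
      simp only [Finset.mem_filter] at hW
      have hiW : i ∈ W := hW.2
      have h1 : (W.erase i).filter (fun l => l < i) = W.filter (fun l => l < i) := by
        ext l
        simp only [Finset.mem_filter, Finset.mem_erase]
        constructor
        · rintro ⟨⟨_, h⟩, h2⟩; exact ⟨h, h2⟩
        · rintro ⟨h, h2⟩; exact ⟨⟨h2.ne, h⟩, h2⟩
      have h2 : (W.erase i)ᶜ.erase i = Wᶜ := by
        ext l
        simp only [Finset.mem_erase, Finset.mem_compl]
        by_cases hli : l = i
        · subst hli; simp [hiW]
        · simp [hli]
      have h3 : p i * ∏ l ∈ W.erase i, p l = ∏ l ∈ W, p l := Finset.mul_prod_erase W p hiW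
      rw [h1, h2, worldProb, ← h3]
  -- step 3: evaluate the sum via prod_add
  have key : ∏ l ∈ Finset.univ.erase i, ((p l * (if l < i then α else 1)) + (1 - p l))
      = ∑ S ∈ (Finset.univ.erase i).powerset,
          (∏ l ∈ S, p l * (if l < i then α else 1)) * ∏ l ∈ (Finset.univ.erase i) \ S, (1 - p l) :=
    Finset.prod_add _ _ _
  have hprodsplit : ∀ S ∈ (Finset.univ.erase i).powerset,
      (∏ l ∈ S, p l * (if l < i then α else 1)) * ∏ l ∈ (Finset.univ.erase i) \ S, (1 - p l)
        = (∏ l ∈ S, p l) * α ^ (S.filter (fun l => l < i)).card * ∏ l ∈ Sᶜ.erase i, (1 - p l) := by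
    intro S hS
    have hc : (Finset.univ.erase i) \ S = Sᶜ.erase i := by
      ext l
      simp only [Finset.mem_sdiff, Finset.mem_erase, Finset.mem_compl, Finset.mem_univ,
        and_true, true_and]
      try tauto
    rw [hc, Finset.prod_mul_distrib, Finset.prod_ite, Finset.prod_const, Finset.prod_const_one]
    try rw [mul_one]
    try ring
  have step3 : ∑ S ∈ (Finset.univ.erase i).powerset,
        α ^ ((S.filter (fun l => l < i)).card + 1)
          * (p i * (∏ l ∈ S, p l) * ∏ l ∈ Sᶜ.erase i, (1 - p l))
      = α * p i * ∏ l ∈ Finset.univ.erase i, ((p l * (if l < i then α else 1)) + (1 - p l)) := by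
    rw [key, Finset.mul_sum]
    refine Finset.sum_congr rfl fun S hS => ?_
    rw [hprodsplit S hS]
    ring
  have hfinal : ∏ l ∈ Finset.univ.erase i, ((p l * (if l < i then α else 1)) + (1 - p l))
      = ∏ l ∈ Finset.Iio i, (1 - p l + p l * α) := by
    rw [← Finset.prod_filter_mul_prod_filter_not (Finset.univ.erase i) (fun l => l < i)]
    have h1 : (Finset.univ.erase i).filter (fun l => l < i) = Finset.Iio i := by
      ext l
      simp only [Finset.mem_filter, Finset.mem_erase, Finset.mem_univ, and_true,
        Finset.mem_Iio, true_and]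
      exact ⟨fun h => h.2, fun h => ⟨h.ne, h⟩⟩
    have h2 : ∏ l ∈ (Finset.univ.erase i).filter (fun l => ¬ l < i),
        ((p l * (if l < i then α else 1)) + (1 - p l)) = 1 := by
      refine Finset.prod_eq_one fun l hl => ?_
      simp only [Finset.mem_filter] at hl
      rw [if_neg hl.2]
      ring
    rw [h2, mul_one, h1]
    refine Finset.prod_congr rfl fun l hl => ?_
    rw [if_pos (Finset.mem_Iio.1 hl)]
    ring
  rw [step2, step3, hfinal]

/-- In a tuple-independent probabilistic database, if tuple `t_i` dominates
tuple `t_j` — that is, `i < j` (so `t_i` has the higher score) and `p i ≥ p j` — then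
`Υ_α(t_i) ≥ Υ_α(t_j)` for every `α ∈ [0,1]`; i.e. `t_i` is always ranked at least as high as
`t_j` by `PRF^e(α)` for any `α`. -/
theorem prfe_le_of_dominates
    (n : ℕ) (p : Fin n → ℝ) (hp : ∀ l, 0 ≤ p l ∧ p l ≤ 1)
    (i j : Fin n) (hij : i < j) (hpij : p j ≤ p i) :
    ∀ α ∈ Set.Icc (0 : ℝ) 1, prfe n p j α ≤ prfe n p i α := by
  intro α hα
  obtain ⟨hα0, hα1⟩ := hα
  rw [prfe_closed_form, prfe_closed_form]
  have hf0 : ∀ l : Fin n, 0 ≤ 1 - p l + p l * α := by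
    intro l
    nlinarith [(hp l).1, (hp l).2]
  have hf1 : ∀ l : Fin n, 1 - p l + p l * α ≤ 1 := by
    intro l
    nlinarith [(hp l).1, (hp l).2]
  have hsplit : Finset.Iio j = Finset.Iio i ∪ Finset.Ico i j := by
    ext l
    simp only [Finset.mem_union, Finset.mem_Iio, Finset.mem_Ico]
    constructor
    · intro h
      rcases lt_or_ge l i with h' | h'
      · exact Or.inl h'
      · exact Or.inr ⟨h', h⟩
    · rintro (h | ⟨_, h⟩)
      · exact h.trans hij
      · exact h
  have hdisj : Disjoint (Finset.Iio i) (Finset.Ico i j) := by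
    rw [Finset.disjoint_left]
    intro a ha ha'
    exact absurd (Finset.mem_Ico.1 ha').1 (not_le.2 (Finset.mem_Iio.1 ha))
  rw [hsplit, Finset.prod_union hdisj]
  have hP0 : 0 ≤ ∏ l ∈ Finset.Iio i, (1 - p l + p l * α) :=
    Finset.prod_nonneg fun l _ => hf0 l
  have hQ0 : 0 ≤ ∏ l ∈ Finset.Ico i j, (1 - p l + p l * α) :=
    Finset.prod_nonneg fun l _ => hf0 l
  have hQ1 : ∏ l ∈ Finset.Ico i j, (1 - p l + p l * α) ≤ 1 :=
    Finset.prod_le_one (fun l _ => hf0 l) (fun l _ => hf1 l)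
  have hpj0 : 0 ≤ p j := (hp j).1
  calc α * p j * ((∏ l ∈ Finset.Iio i, (1 - p l + p l * α)) *
          ∏ l ∈ Finset.Ico i j, (1 - p l + p l * α))
      ≤ α * p j * ((∏ l ∈ Finset.Iio i, (1 - p l + p l * α)) * 1) := by
        apply mul_le_mul_of_nonneg_left
        · exact mul_le_mul_of_nonneg_left hQ1 hP0
        · positivity
    _ = α * p j * ∏ l ∈ Finset.Iio i, (1 - p l + p l * α) := by ring
    _ ≤ α * p i * ∏ l ∈ Finset.Iio i, (1 - p l + p l * α) := by
        apply mul_le_mul_of_nonneg_right _ hP0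
        exact mul_le_mul_of_nonneg_left hpij hα0
end

section
/- Let ≻_1 and ≻_2 be two strict linear orders on a finite set T with |T| ≥ k, and let K_1 and K_2 be the sets of the k largest elements of T under ≻_1 and ≻_2 respectively. Then the Kendall tau distance between the two top-k answers satisfies dis(K_1,K_2) ≥ (k − |K_1 ∩ K_2|)²; consequently, if the normalized Kendall distance dis(K_1,K_2)/k² equals δ, then |K_1 ∩ K_2| ≥ (1 − √δ)·k, i.e., the two top-k answers share at least a 1 − √δ fraction of their tuples. -/
/-- The Kendall tau distance between the top-`k` answers `K₁` and `K₂` of two strict linear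
orders `r₁`, `r₂`: the number of unordered pairs of distinct elements of `K₁ ∪ K₂` appearing
in opposite relative order under `r₁` and `r₂`.  For strict total orders, each such unordered
pair `{a, b}` corresponds to exactly one ordered pair `(a, b)` with `r₁ a b ∧ r₂ b a`. -/
def kendallDis {T : Type} [DecidableEq T] (r₁ r₂ : T → T → Prop)
    [DecidableRel r₁] [DecidableRel r₂] (K₁ K₂ : Finset T) : ℕ :=
  (((K₁ ∪ K₂) ×ˢ (K₁ ∪ K₂)).filter (fun q => r₁ q.1 q.2 ∧ r₂ q.2 q.1)).card

/-- Let `≻₁` and `≻₂` be two strict linear orders on a finite set `T` with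
`|T| ≥ k`, and let `K₁`, `K₂` be the sets of the `k` largest elements of `T` under `≻₁`,
`≻₂` respectively.  Then `dis(K₁,K₂) ≥ (k − |K₁ ∩ K₂|)²`; consequently, if the normalized
Kendall distance `dis(K₁,K₂)/k²` equals `δ`, then `|K₁ ∩ K₂| ≥ (1 − √δ)·k`, i.e. the two
top-`k` answers share at least a `1 − √δ` fraction of their tuples. -/
theorem kendallDis_lower_bound {T : Type} [Fintype T] [DecidableEq T]
    (r₁ r₂ : T → T → Prop) [DecidableRel r₁] [DecidableRel r₂]
    (h₁ : IsStrictTotalOrder T r₁) (h₂ : IsStrictTotalOrder T r₂)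
    (k : ℕ) (hk : k ≤ Fintype.card T)
    (K₁ K₂ : Finset T) (hK₁ : K₁.card = k) (hK₂ : K₂.card = k)
    (htop₁ : ∀ a ∈ K₁, ∀ b ∉ K₁, r₁ a b)
    (htop₂ : ∀ a ∈ K₂, ∀ b ∉ K₂, r₂ a b) :
    (k - (K₁ ∩ K₂).card) ^ 2 ≤ kendallDis r₁ r₂ K₁ K₂
    ∧ ∀ δ : ℝ, ((kendallDis r₁ r₂ K₁ K₂ : ℝ) / (k : ℝ) ^ 2 = δ) →
        (1 - Real.sqrt δ) * (k : ℝ) ≤ ((K₁ ∩ K₂).card : ℝ) := by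
  classical
  set m := (K₁ ∩ K₂).card with hm
  have hmle : m ≤ k := by
    rw [hm, ← hK₁]; exact Finset.card_le_card Finset.inter_subset_left
  have hcard1 : (K₁ \ K₂).card = k - m := by
    rw [← Finset.sdiff_inter_self_left K₁ K₂, Finset.card_sdiff_of_subset Finset.inter_subset_left, hK₁]
  have hcard2 : (K₂ \ K₁).card = k - m := by
    rw [← Finset.sdiff_inter_self_left K₂ K₁, Finset.card_sdiff_of_subset Finset.inter_subset_left, hK₂,
      hm, Finset.inter_comm]
  have hsub : (K₁ \ K₂) ×ˢ (K₂ \ K₁) ⊆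
      ((K₁ ∪ K₂) ×ˢ (K₁ ∪ K₂)).filter (fun q => r₁ q.1 q.2 ∧ r₂ q.2 q.1) := by
    intro q hq
    rw [Finset.mem_product, Finset.mem_sdiff, Finset.mem_sdiff] at hq
    obtain ⟨⟨ha1, ha2⟩, hb2, hb1⟩ := hq
    refine Finset.mem_filter.mpr ⟨Finset.mem_product.mpr ⟨?_, ?_⟩, ?_, ?_⟩
    · exact Finset.mem_union_left _ ha1
    · exact Finset.mem_union_right _ hb2
    · exact htop₁ _ ha1 _ hb1
    · exact htop₂ _ hb2 _ ha2
  have hmain : (k - m) ^ 2 ≤ kendallDis r₁ r₂ K₁ K₂ := by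
    have := Finset.card_le_card hsub
    rwa [Finset.card_product, hcard1, hcard2, ← sq] at this
  refine ⟨hmain, ?_⟩
  intro δ hδ
  rcases Nat.eq_zero_or_pos k with hk0 | hk0
  · simp [hk0]
  · have hkR : (0:ℝ) < (k:ℝ) := by exact_mod_cast hk0
    have hδ0 : 0 ≤ δ := by
      rw [← hδ]; positivity
    have hcast : ((k - m : ℕ) : ℝ) = (k:ℝ) - (m:ℝ) := Nat.cast_sub hmle
    have hsq : ((k:ℝ) - m)^2 ≤ δ * (k:ℝ)^2 := by
      have h1 : (((k - m)^2 : ℕ) : ℝ) ≤ (kendallDis r₁ r₂ K₁ K₂ : ℝ) := by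
        exact_mod_cast hmain
      have h2 : (kendallDis r₁ r₂ K₁ K₂ : ℝ) = δ * (k:ℝ)^2 := by
        field_simp at hδ; linarith [hδ]
      calc ((k:ℝ) - m)^2 = (((k - m)^2 : ℕ) : ℝ) := by push_cast [hcast]; ring
        _ ≤ _ := h1
        _ = δ * (k:ℝ)^2 := h2
    have hle : (k:ℝ) - m ≤ Real.sqrt δ * k := by
      rcases le_or_gt ((k:ℝ) - m) 0 with h | h
      · have : 0 ≤ Real.sqrt δ * k := by positivity
        linarith
      · have hsq2 : (((k:ℝ) - m) / k)^2 ≤ δ := by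
          rw [div_pow, div_le_iff₀ (by positivity)]
          linarith [hsq]
        have : ((k:ℝ) - m) / k ≤ Real.sqrt δ := by
          have := Real.sqrt_le_sqrt hsq2
          rwa [Real.sqrt_sq (by positivity)] at this
        calc (k:ℝ) - m = (((k:ℝ) - m)/k) * k := by field_simp
          _ ≤ Real.sqrt δ * k := by
            apply mul_le_mul_of_nonneg_right this (le_of_lt hkR)
    nlinarith [hle]
end
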